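/- arXiv:2002.07378 — 8 statements merged into one kernel-verified Lean document; each statement's English description precedes it below -/
import Mathlib

section
/- Under the DAN (Polyak adaptive Newton) iteration, for every k ≤ k₀ one has ‖∇f(x_k)‖ ≤ ‖∇f(x₀)‖ − (μ²/(2L))·k, and for every k > k₀ one has ‖∇f(x_k)‖ ≤ (2μ²/L)·γ^(2^(k−k₀)). -/
/-!
With `λₖ = L / (2μ²) ‖∇f(xₖ)‖`, the Newton step and strong convexity give
`μ ‖x_{k+1} - xₖ‖ ≤ αₖ ‖∇f(xₖ)‖`, and the Lipschitz Hessian turns this into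
`λ_{k+1} ≤ (1 - αₖ) λₖ + (αₖ λₖ)²` with `αₖ = min 1 (1 / (2λₖ))`.
So `λ` drops by at least `1/4` per step while `λₖ ≥ 1/2`, and `λ_{k+1} ≤ λₖ²` always;
`k₀` is chosen so that the first regime covers all `k ≤ k₀` and `λ_{k₀} ≤ γ`.
-/

open InnerProductSpace in
theorem ContDiff.differentiable_gradient {E : Type*} [NormedAddCommGroup E]
    [InnerProductSpace ℝ E] [CompleteSpace E] {f : E → ℝ} (hf : ContDiff ℝ 2 f) :
    Differentiable ℝ (gradient f) :=
  ((toDual ℝ E).symm.contDiff.comp (hf.fderiv_right one_add_one_eq_two.le)).differentiable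
    one_ne_zero

section NewtonStep

variable {E F : Type*} [NormedAddCommGroup F] [NormedSpace ℝ F]

theorem norm_sub_sub_fderiv_le_of_lipschitz_fderiv [NormedAddCommGroup E] [NormedSpace ℝ E]
    {G : E → F} (hG : Differentiable ℝ G) {L : ℝ}
    (hlip : ∀ y z, ‖fderiv ℝ G y - fderiv ℝ G z‖ ≤ L * ‖y - z‖) (x y : E) :
    ‖G y - G x - fderiv ℝ G x (y - x)‖ ≤ L / 2 * ‖y - x‖ ^ 2 := by
  set d := y - x
  set φ : ℝ → F := fun t => G (x + t • d) - G x - t • fderiv ℝ G x d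
  have hφ : ∀ t : ℝ, HasDerivAt φ (fderiv ℝ G (x + t • d) d - fderiv ℝ G x d) t := by
    intro t
    have hline : HasDerivAt (fun t : ℝ => x + t • d) d t := by
      simpa using ((hasDerivAt_id t).smul_const d).const_add x
    have h := (((hG _).hasFDerivAt.comp_hasDerivAt t hline).sub_const (G x)).sub
      ((hasDerivAt_id t).smul_const (fderiv ℝ G x d))
    rwa [one_smul] at h
  have hbound : ∀ t ∈ Set.Icc (0 : ℝ) 1, ‖φ t‖ ≤ L / 2 * ‖d‖ ^ 2 * t ^ 2 := by
    refine image_norm_le_of_norm_deriv_right_le_deriv_boundary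
      (B' := fun t => L / 2 * ‖d‖ ^ 2 * (2 * t))
      (fun t _ => (hφ t).continuousAt.continuousWithinAt) (fun t _ => (hφ t).hasDerivWithinAt)
      (by simp [φ]) (fun t => by simpa using (hasDerivAt_pow 2 t).const_mul (L / 2 * ‖d‖ ^ 2))
      fun t ht => ?_
    calc ‖fderiv ℝ G (x + t • d) d - fderiv ℝ G x d‖
        ≤ ‖fderiv ℝ G (x + t • d) - fderiv ℝ G x‖ * ‖d‖ :=
          (fderiv ℝ G (x + t • d) - fderiv ℝ G x).le_opNorm d
      _ ≤ L * (t * ‖d‖) * ‖d‖ := by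
          gcongr
          simpa [norm_smul, abs_of_nonneg ht.1] using hlip (x + t • d) x
      _ = L / 2 * ‖d‖ ^ 2 * (2 * t) := by ring
  simpa [φ, d] using hbound 1 (by simp)

variable [NormedAddCommGroup E] [InnerProductSpace ℝ E]

theorem mul_norm_le_of_apply_eq_neg_smul {H : E →L[ℝ] E} {μ α : ℝ} {g d : E}
    (hcoer : μ * ‖d‖ ^ 2 ≤ inner ℝ (H d) d) (hα : 0 ≤ α) (hd : H d = -α • g) :
    μ * ‖d‖ ≤ α * ‖g‖ := by
  rw [hd, inner_smul_left, RCLike.conj_to_real] at hcoer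
  have hinner := neg_le_of_abs_le (abs_real_inner_le_norm g d)
  rcases (norm_nonneg d).eq_or_lt with h0 | hpos
  · rw [← h0, mul_zero]; positivity
  · nlinarith [mul_le_mul_of_nonneg_left hinner hα]

theorem norm_apply_dampedNewtonStep_le {G : E → E} (hG : Differentiable ℝ G) {μ L α : ℝ}
    (hμ : 0 < μ) (hL : 0 ≤ L) (hlip : ∀ y z, ‖fderiv ℝ G y - fderiv ℝ G z‖ ≤ L * ‖y - z‖)
    {x x' : E} (hcoer : μ * ‖x' - x‖ ^ 2 ≤ inner ℝ (fderiv ℝ G x (x' - x)) (x' - x))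
    (hα₀ : 0 ≤ α) (hα₁ : α ≤ 1) (hx' : fderiv ℝ G x (x' - x) = -α • G x) :
    ‖G x'‖ ≤ (1 - α) * ‖G x‖ + L / (2 * μ ^ 2) * (α * ‖G x‖) ^ 2 := by
  have hstep : ‖x' - x‖ ≤ α * ‖G x‖ / μ := by
    rw [le_div_iff₀ hμ, mul_comm]
    exact mul_norm_le_of_apply_eq_neg_smul hcoer hα₀ hx'
  have htaylor := norm_sub_sub_fderiv_le_of_lipschitz_fderiv hG hlip x x'
  rw [hx'] at htaylor
  calc ‖G x'‖ = ‖(G x' - G x - -α • G x) + (1 - α) • G x‖ := by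
        congr 1; rw [sub_smul, one_smul, neg_smul]; abel
    _ ≤ L / 2 * ‖x' - x‖ ^ 2 + (1 - α) * ‖G x‖ := by
        grw [norm_add_le, htaylor, norm_smul, Real.norm_of_nonneg (sub_nonneg.2 hα₁)]
    _ ≤ L / 2 * (α * ‖G x‖ / μ) ^ 2 + (1 - α) * ‖G x‖ := by gcongr
    _ = (1 - α) * ‖G x‖ + L / (2 * μ ^ 2) * (α * ‖G x‖) ^ 2 := by field_simp; ring

end NewtonStep

section DampedSequence

theorem min_one_one_div_two_mul_mul_self {h : ℝ} (hh : 1 / 2 ≤ h) :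
    min 1 (1 / (2 * h)) * h = 1 / 2 := by
  rw [min_eq_right (by rw [div_le_one (by positivity)]; linarith)]
  field_simp

theorem dampedStep_le_sq {h h' : ℝ} (hh : 0 ≤ h)
    (hstep : h' ≤ (1 - min 1 (1 / (2 * h))) * h + (min 1 (1 / (2 * h)) * h) ^ 2) :
    h' ≤ h ^ 2 := by
  rcases hh.eq_or_lt with rfl | hpos
  · simpa using hstep
  rcases lt_or_ge h (1 / 2) with hlt | hge
  · rw [min_eq_left (by rw [le_div_iff₀ (by positivity)]; linarith)] at hstep
    simpa using hstep
  · rw [sub_mul, one_mul, min_one_one_div_two_mul_mul_self hge] at hstep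
    nlinarith [sq_nonneg (h - 1 / 2)]

theorem dampedStep_le_max {h h' : ℝ} (hh : 0 ≤ h)
    (hstep : h' ≤ (1 - min 1 (1 / (2 * h))) * h + (min 1 (1 / (2 * h)) * h) ^ 2) :
    h' ≤ max (h - 1 / 4) (1 / 4) := by
  rcases lt_or_ge h (1 / 2) with hlt | hge
  · exact le_max_of_le_right <| (dampedStep_le_sq hh hstep).trans (by nlinarith)
  · rw [sub_mul, one_mul, min_one_one_div_two_mul_mul_self hge] at hstep
    exact le_max_of_le_left (by linarith)

variable {u : ℕ → ℝ}

theorem le_pow_two_pow_of_le_sq (hu : ∀ k, 0 ≤ u k) (hsq : ∀ k, u (k + 1) ≤ u k ^ 2)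
    (k m : ℕ) : u (k + m) ≤ u k ^ 2 ^ m := by
  induction m with
  | zero => simp
  | succ m ih =>
    calc u (k + m + 1) ≤ u (k + m) ^ 2 := hsq _
      _ ≤ (u k ^ 2 ^ m) ^ 2 := pow_le_pow_left₀ (hu _) ih 2
      _ = u k ^ 2 ^ (m + 1) := by rw [← pow_mul, pow_succ]

theorem le_sub_div_four_of_le_max (hstep : ∀ k, u (k + 1) ≤ max (u k - 1 / 4) (1 / 4)) :
    ∀ n : ℕ, (n : ℝ) ≤ max 0 (4 * u 0 - 1) → u n ≤ u 0 - n / 4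
  | 0, _ => by simp
  | n + 1, hn => by
    have hn' : (n : ℝ) + 1 ≤ 4 * u 0 - 1 := by
      push_cast at hn
      exact (le_max_iff.mp hn).resolve_left (by linarith [n.cast_nonneg (α := ℝ)])
    have ih := le_sub_div_four_of_le_max hstep n (le_max_of_le_right (by linarith))
    push_cast
    refine (hstep n).trans (max_le ?_ ?_) <;> linarith

theorem natCast_le_max_of_eq_max_ceil_sub_two {t : ℝ} {N : ℕ}
    (hN : (N : ℤ) = max 0 (⌈t⌉ - 2)) : (N : ℝ) ≤ max 0 (t - 1) := by
  rcases le_or_gt (⌈t⌉ - 2) 0 with hle | hlt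
  · rw [max_eq_left hle] at hN
    simp [show N = 0 by omega]
  · rw [max_eq_right hlt.le] at hN
    have hNt : (N : ℝ) = ⌈t⌉ - 2 := by exact_mod_cast hN
    exact le_max_of_le_right (by linarith [Int.ceil_lt_add_one t])

theorem dampedSeq_bounds (hu : ∀ k, 0 ≤ u k)
    (hstep : ∀ k, u (k + 1) ≤
      (1 - min 1 (1 / (2 * u k))) * u k + (min 1 (1 / (2 * u k)) * u k) ^ 2)
    {N : ℕ} (hN : (N : ℤ) = max 0 (⌈4 * u 0⌉ - 2)) :
    (∀ k ≤ N, u k ≤ u 0 - k / 4) ∧ ∀ k > N, u k ≤ (u 0 - N / 4) ^ 2 ^ (k - N) := by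
  have hdamped : ∀ k ≤ N, u k ≤ u 0 - k / 4 := fun k hk =>
    le_sub_div_four_of_le_max (fun n => dampedStep_le_max (hu n) (hstep n)) k <|
      (Nat.cast_le.2 hk).trans (natCast_le_max_of_eq_max_ceil_sub_two hN)
  refine ⟨hdamped, fun k hk => ?_⟩
  have hsq n := dampedStep_le_sq (hu n) (hstep n)
  have := (le_pow_two_pow_of_le_sq hu hsq N (k - N)).trans
    (pow_le_pow_left₀ (hu N) (hdamped N le_rfl) _)
  rwa [Nat.add_sub_cancel' hk.le] at this

end DampedSequence

theorem dan_gradient_bounds_general (p : ℕ)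
    (f : EuclideanSpace ℝ (Fin p) → ℝ) (hf : ContDiff ℝ 2 f)
    (μ L : ℝ) (hμ : 0 < μ) (hL : 0 < L)
    (hstrong : ∀ x v : EuclideanSpace ℝ (Fin p),
      μ * ‖v‖ ^ 2 ≤ inner ℝ (fderiv ℝ (gradient f) x v) v)
    (hlip : ∀ x y : EuclideanSpace ℝ (Fin p),
      ‖fderiv ℝ (gradient f) x - fderiv ℝ (gradient f) y‖ ≤ L * ‖x - y‖)
    (x : ℕ → EuclideanSpace ℝ (Fin p)) (α : ℕ → ℝ)
    (hα : ∀ k, α k = min 1 (μ ^ 2 / (L * ‖gradient f (x k)‖)))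
    (hupd : ∀ k, fderiv ℝ (gradient f) (x k) (x (k + 1) - x k)
      = -(α k) • gradient f (x k))
    (k₀ : ℕ) (hk₀ : (k₀ : ℤ) = max 0 (⌈2 * L / μ ^ 2 * ‖gradient f (x 0)‖⌉ - 2))
    (γ : ℝ) (hγ : γ = L / (2 * μ ^ 2) * ‖gradient f (x 0)‖ - (k₀ : ℝ) / 4) :
    (∀ k ≤ k₀, ‖gradient f (x k)‖ ≤ ‖gradient f (x 0)‖ - μ ^ 2 / (2 * L) * k) ∧
    (∀ k > k₀, ‖gradient f (x k)‖ ≤ 2 * μ ^ 2 / L * γ ^ 2 ^ (k - k₀)) := by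
  have hc : 0 < L / (2 * μ ^ 2) := by positivity
  obtain ⟨h, h_def⟩ : ∃ h : ℕ → ℝ, ∀ k, h k = L / (2 * μ ^ 2) * ‖gradient f (x k)‖ :=
    ⟨_, fun _ => rfl⟩
  have hh₀ : ∀ k, 0 ≤ h k := fun k => by rw [h_def]; positivity
  have hstep : ∀ k, h (k + 1) ≤ (1 - α k) * h k + (α k * h k) ^ 2 := fun k => by
    have hα₀ : 0 ≤ α k := by rw [hα]; positivity
    have := norm_apply_dampedNewtonStep_le hf.differentiable_gradient hμ hL.le hlip
      (hstrong _ _) hα₀ (by rw [hα]; exact min_le_left _ _) (hupd k)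
    rw [h_def, h_def]
    calc _ ≤ L / (2 * μ ^ 2) * ((1 - α k) * ‖gradient f (x k)‖
          + L / (2 * μ ^ 2) * (α k * ‖gradient f (x k)‖) ^ 2) := by gcongr
      _ = _ := by ring
  have hα' : ∀ k, α k = min 1 (1 / (2 * h k)) := fun k => by
    rw [hα, h_def]; congr 1; field_simp
  obtain ⟨hdamped, hquadratic⟩ := dampedSeq_bounds hh₀ (fun k => hα' k ▸ hstep k) (N := k₀)
    (by rw [hk₀, h_def]; congr 3; field_simp; ring)
  rw [← h_def] at hγ
  refine ⟨fun k hk => le_of_mul_le_mul_left ((h_def k ▸ hdamped k hk).trans_eq ?_) hc,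
    fun k hk => le_of_mul_le_mul_left ((h_def k ▸ hquadratic k hk).trans_eq ?_) hc⟩
  · rw [h_def]; field_simp; ring
  · rw [← hγ]; field_simp

theorem dan_gradient_bounds (p : ℕ) (hp : 1 ≤ p)
    (f : EuclideanSpace ℝ (Fin p) → ℝ) (hf : ContDiff ℝ 2 f)
    (μ L : ℝ) (hμ : 0 < μ) (hL : 0 < L)
    (hstrong : ∀ x v : EuclideanSpace ℝ (Fin p),
      μ * ‖v‖ ^ 2 ≤ inner ℝ (fderiv ℝ (gradient f) x v) v)
    (hlip : ∀ x y : EuclideanSpace ℝ (Fin p),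
      ‖fderiv ℝ (gradient f) x - fderiv ℝ (gradient f) y‖ ≤ L * ‖x - y‖)
    (x : ℕ → EuclideanSpace ℝ (Fin p)) (α : ℕ → ℝ)
    (hα : ∀ k, α k = min 1 (μ ^ 2 / (L * ‖gradient f (x k)‖)))
    (hupd : ∀ k, fderiv ℝ (gradient f) (x k) (x (k + 1) - x k)
      = -(α k) • gradient f (x k))
    (k₀ : ℕ) (hk₀ : (k₀ : ℤ) = max 0 (⌈2 * L / μ ^ 2 * ‖gradient f (x 0)‖⌉ - 2))
    (γ : ℝ) (hγ : γ = L / (2 * μ ^ 2) * ‖gradient f (x 0)‖ - (k₀ : ℝ) / 4) :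
    (∀ k ≤ k₀, ‖gradient f (x k)‖ ≤ ‖gradient f (x 0)‖ - μ ^ 2 / (2 * L) * k) ∧
    (∀ k > k₀, ‖gradient f (x k)‖ ≤ 2 * μ ^ 2 / L * γ ^ 2 ^ (k - k₀)) :=
  dan_gradient_bounds_general p f hf μ L hμ hL hstrong hlip x α hα hupd k₀ hk₀ γ hγ
end

section
/- Under the DAN (Polyak adaptive Newton) iteration, the sequence ‖∇f(x_k)‖ is monotonically non-increasing, i.e. ‖∇f(x_{k+1})‖ ≤ ‖∇f(x_k)‖ for all k ≥ 0, and the sequence (x_k) converges to the unique minimizer x⋆ of f. -/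
/-!
Write `g = ∇f(x)` and `d = x' - x` for one damped Newton step, so `∇²f(x) d = -α g`. Strong
convexity gives `μ‖d‖ ≤ α‖g‖`, and the Lipschitz Hessian gives the second-order remainder
`‖∇f(x') - (1 - α) g‖ ≤ L/2 ‖d‖²`. The cap `α L ‖g‖ ≤ μ²` built into the step size makes the
remainder at most `α‖g‖/2`, so `‖∇f(x')‖ ≤ (1 - α/2)‖g‖`. With the adaptive choice of `α` this
is `max (‖g‖/2) (‖g‖ - μ²/(2L))`, so the gradient norms decrease to `0`, and strong
monotonicity of `∇f` gives `μ‖x_k - x⋆‖ ≤ ‖∇f(x_k)‖`.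
-/

open Filter Topology

section
variable {E F : Type*} [NormedAddCommGroup E] [NormedSpace ℝ E]
  [NormedAddCommGroup F] [NormedSpace ℝ F]

theorem hasDerivAt_comp_add_smul {G : E → F} {G' : E →L[ℝ] F} (a d : E) (t : ℝ)
    (hG : HasFDerivAt G G' (a + t • d)) :
    HasDerivAt (fun s : ℝ => G (a + s • d)) (G' d) t := by
  have hline : HasDerivAt (fun s : ℝ => a + s • d) d t := by
    simpa using ((hasDerivAt_id t).smul_const d).const_add a
  exact hG.comp_hasDerivAt t hline

theorem norm_sub_sub_fderiv_le_of_lipschitz {G : E → F} {H : E → E →L[ℝ] F} {L : ℝ}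
    (hG : ∀ y, HasFDerivAt G (H y) y) (hlip : ∀ x y, ‖H x - H y‖ ≤ L * ‖x - y‖) (a b : E) :
    ‖G b - G a - H a (b - a)‖ ≤ L / 2 * ‖b - a‖ ^ 2 := by
  set d := b - a
  have hderiv : ∀ t : ℝ, HasDerivAt (fun s : ℝ => G (a + s • d) - G a - s • H a d)
      (H (a + t • d) d - H a d) t := fun t => by
    have hsmul : HasDerivAt (fun s : ℝ => s • H a d) (H a d) t := by
      simpa using (hasDerivAt_id t).smul_const (H a d)
    exact ((hasDerivAt_comp_add_smul a d t (hG _)).sub_const (G a)).sub hsmul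
  have hbound : ∀ t ∈ Set.Ico (0 : ℝ) 1, ‖H (a + t • d) d - H a d‖ ≤ L * ‖d‖ ^ 2 * t := by
    rintro t ⟨ht, -⟩
    calc ‖H (a + t • d) d - H a d‖ = ‖(H (a + t • d) - H a) d‖ := rfl
      _ ≤ L * ‖a + t • d - a‖ * ‖d‖ :=
        (ContinuousLinearMap.le_opNorm _ _).trans (by gcongr; exact hlip _ _)
      _ = L * ‖d‖ ^ 2 * t := by
        rw [add_sub_cancel_left, norm_smul, Real.norm_of_nonneg ht]; ring
  -- The remainder along the segment is fenced in by `L/2 ‖d‖² t²`, whose derivative dominates.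
  have hB : ∀ t : ℝ, HasDerivAt (fun s : ℝ => L / 2 * ‖d‖ ^ 2 * s ^ 2) (L * ‖d‖ ^ 2 * t) t :=
    fun t => ((hasDerivAt_pow 2 t).const_mul (L / 2 * ‖d‖ ^ 2)).congr_deriv (by ring)
  have := image_norm_le_of_norm_deriv_right_le_deriv_boundary
    (fun t _ => (hderiv t).continuousAt.continuousWithinAt)
    (fun t _ => (hderiv t).hasDerivWithinAt) (by simp) hB hbound
    (Set.right_mem_Icc.mpr zero_le_one)
  simpa [d] using this

end

section
variable {E : Type*} [NormedAddCommGroup E] [InnerProductSpace ℝ E]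

theorem contDiff_gradient [CompleteSpace E] {n : WithTop ℕ∞} {f : E → ℝ}
    (hf : ContDiff ℝ (n + 1) f) : ContDiff ℝ n (gradient f) :=
  (InnerProductSpace.toDual ℝ E).symm.contDiff.comp (hf.fderiv_right le_rfl)

theorem mul_norm_le_norm_of_mul_sq_le_inner {μ : ℝ} {v w : E}
    (h : μ * ‖v‖ ^ 2 ≤ inner ℝ w v) : μ * ‖v‖ ≤ ‖w‖ := by
  rcases (norm_nonneg v).eq_or_lt with hv | hv
  · simp [← hv]
  · refine le_of_mul_le_mul_right ?_ hv
    calc μ * ‖v‖ * ‖v‖ = μ * ‖v‖ ^ 2 := by ring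
      _ ≤ ‖w‖ * ‖v‖ := h.trans (real_inner_le_norm w v)

theorem mul_sq_le_inner_sub_of_fderiv {G : E → E} {H : E → E →L[ℝ] E} {μ : ℝ}
    (hG : ∀ y, HasFDerivAt G (H y) y) (hstrong : ∀ x v, μ * ‖v‖ ^ 2 ≤ inner ℝ (H x v) v)
    (a b : E) : μ * ‖b - a‖ ^ 2 ≤ inner ℝ (G b - G a) (b - a) := by
  set d := b - a
  have hderiv : ∀ t : ℝ, HasDerivAt (fun s : ℝ => inner ℝ (G (a + s • d)) d)
      (inner ℝ (H (a + t • d) d) d) t := fun t => by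
    simpa using (hasDerivAt_comp_add_smul a d t (hG _)).inner ℝ (hasDerivAt_const t d)
  have := mul_sub_le_image_sub_of_le_deriv (fun t => (hderiv t).differentiableAt)
    (fun t => (hderiv t).deriv ▸ hstrong _ d) zero_le_one
  simpa [d, inner_sub_left] using this

theorem mul_norm_sub_le_norm_sub_of_fderiv {G : E → E} {H : E → E →L[ℝ] E} {μ : ℝ}
    (hG : ∀ y, HasFDerivAt G (H y) y) (hstrong : ∀ x v, μ * ‖v‖ ^ 2 ≤ inner ℝ (H x v) v)
    (a b : E) : μ * ‖b - a‖ ≤ ‖G b - G a‖ :=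
  mul_norm_le_norm_of_mul_sq_le_inner (mul_sq_le_inner_sub_of_fderiv hG hstrong a b)

theorem norm_damped_newton_step_le {G : E → E} {H : E → E →L[ℝ] E} {μ L α : ℝ} {x x' : E}
    (hG : ∀ y, HasFDerivAt G (H y) y) (hlip : ∀ x y, ‖H x - H y‖ ≤ L * ‖x - y‖)
    (hμ : 0 < μ) (hL : 0 ≤ L) (hstrong : ∀ v, μ * ‖v‖ ^ 2 ≤ inner ℝ (H x v) v)
    (hα₀ : 0 ≤ α) (hα₁ : α ≤ 1) (hαL : α * (L * ‖G x‖) ≤ μ ^ 2)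
    (hstep : H x (x' - x) = -α • G x) :
    ‖G x'‖ ≤ (1 - α / 2) * ‖G x‖ := by
  set d := x' - x
  set g := G x
  have hd : μ * ‖d‖ ≤ α * ‖g‖ := by
    simpa [hstep, norm_smul, abs_of_nonneg hα₀] using
      mul_norm_le_norm_of_mul_sq_le_inner (hstrong d)
  have hLd : L * ‖d‖ ^ 2 ≤ α * ‖g‖ := by
    refine le_of_mul_le_mul_left ?_ (pow_pos hμ 2)
    calc μ ^ 2 * (L * ‖d‖ ^ 2) = L * (μ * ‖d‖) ^ 2 := by ring
      _ ≤ L * (α * ‖g‖) ^ 2 := by gcongr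
      _ = α * ‖g‖ * (α * (L * ‖g‖)) := by ring
      _ ≤ α * ‖g‖ * μ ^ 2 := by gcongr
      _ = μ ^ 2 * (α * ‖g‖) := by ring
  have htaylor := norm_sub_sub_fderiv_le_of_lipschitz hG hlip x x'
  rw [hstep, show G x' - g - -α • g = G x' - (1 - α) • g by module] at htaylor
  calc ‖G x'‖ ≤ ‖(1 - α) • g‖ + ‖G x' - (1 - α) • g‖ := norm_le_insert' _ _
    _ ≤ (1 - α) * ‖g‖ + L / 2 * ‖d‖ ^ 2 := by
      rw [norm_smul, Real.norm_of_nonneg (sub_nonneg.mpr hα₁)]; gcongr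
    _ ≤ (1 - α / 2) * ‖g‖ := by linarith

end

theorem min_one_div_mul_le {c s : ℝ} (hc : 0 ≤ c) (hs : 0 ≤ s) : min 1 (c / s) * s ≤ c := by
  rcases hs.eq_or_lt with rfl | hs
  · simpa using hc
  · calc min 1 (c / s) * s ≤ c / s * s := by gcongr; exact min_le_right _ _
      _ = c := div_mul_cancel₀ c hs.ne'

theorem one_sub_min_div_half_mul_eq_max {c L r : ℝ} (hc : 0 ≤ c) (hL : 0 < L) (hr : 0 ≤ r) :
    (1 - min 1 (c / (L * r)) / 2) * r = max (r / 2) (r - c / (2 * L)) := by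
  -- At `r = 0` the junk value `c / 0 = 0` makes the step size `0`, and both sides vanish.
  rcases hr.eq_or_lt with rfl | hr
  · simp [div_nonneg hc (by positivity : (0 : ℝ) ≤ 2 * L)]
  rw [show c / (2 * L) = c / (L * r) * r / 2 by field_simp]
  generalize c / (L * r) = s
  rcases le_total 1 s with h | h
  · rw [min_eq_left h, max_eq_left (by nlinarith)]; ring
  · rw [min_eq_right h, max_eq_right (by nlinarith)]; ring

theorem tendsto_zero_of_le_max_half_sub {r : ℕ → ℝ} {c : ℝ} (hanti : Antitone r) (hc : 0 < c)
    (hr : ∀ k, 0 ≤ r k) (hrec : ∀ k, r (k + 1) ≤ max (r k / 2) (r k - c)) :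
    Tendsto r atTop (𝓝 0) := by
  have hlim := tendsto_atTop_ciInf hanti ⟨0, Set.forall_mem_range.mpr hr⟩
  generalize (⨅ k, r k) = l at hlim
  have hl : l ≤ max (l / 2) (l - c) :=
    le_of_tendsto_of_tendsto' (hlim.comp (tendsto_add_atTop_nat 1))
      ((hlim.div_const 2).max (hlim.sub_const c)) hrec
  have hl₀ : 0 ≤ l := ge_of_tendsto' hlim hr
  obtain rfl : l = 0 := by rcases le_max_iff.mp hl with h | h <;> linarith
  exact hlim

theorem dan_monotone_and_convergence_general (p : ℕ)
    (f : EuclideanSpace ℝ (Fin p) → ℝ) (hf : ContDiff ℝ 2 f)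
    (μ L : ℝ) (hμ : 0 < μ) (hL : 0 < L)
    (hstrong : ∀ x v : EuclideanSpace ℝ (Fin p),
      μ * ‖v‖ ^ 2 ≤ inner ℝ (fderiv ℝ (gradient f) x v) v)
    (hlip : ∀ x y : EuclideanSpace ℝ (Fin p),
      ‖fderiv ℝ (gradient f) x - fderiv ℝ (gradient f) y‖ ≤ L * ‖x - y‖)
    (xs : EuclideanSpace ℝ (Fin p)) (hxs : gradient f xs = 0)
    (x : ℕ → EuclideanSpace ℝ (Fin p)) (α : ℕ → ℝ)
    (hα : ∀ k, α k = min 1 (μ ^ 2 / (L * ‖gradient f (x k)‖)))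
    (hupd : ∀ k, fderiv ℝ (gradient f) (x k) (x (k + 1) - x k)
      = -(α k) • gradient f (x k)) :
    (∀ k, ‖gradient f (x (k + 1))‖ ≤ ‖gradient f (x k)‖) ∧
    Tendsto x atTop (nhds xs) := by
  have hG : ∀ y, HasFDerivAt (gradient f) (fderiv ℝ (gradient f) y) y := fun y =>
    ((contDiff_gradient hf).differentiable one_ne_zero y).hasFDerivAt
  have hstep : ∀ k, ‖gradient f (x (k + 1))‖ ≤
      max (‖gradient f (x k)‖ / 2) (‖gradient f (x k)‖ - μ ^ 2 / (2 * L)) := fun k => by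
    rw [← one_sub_min_div_half_mul_eq_max (sq_nonneg μ) hL (norm_nonneg _), ← hα k]
    refine norm_damped_newton_step_le hG hlip hμ hL.le (hstrong (x k)) ?_ ?_ ?_ (hupd k) <;>
      rw [hα k]
    · exact le_min zero_le_one (by positivity)
    · exact min_le_left _ _
    · exact min_one_div_mul_le (sq_nonneg μ) (by positivity)
  have hmono : ∀ k, ‖gradient f (x (k + 1))‖ ≤ ‖gradient f (x k)‖ := fun k =>
    (hstep k).trans (max_le (half_le_self (norm_nonneg _)) (sub_le_self _ (by positivity)))
  have hgrad : Tendsto (fun k => ‖gradient f (x k)‖) atTop (𝓝 0) :=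
    tendsto_zero_of_le_max_half_sub (antitone_nat_of_succ_le hmono) (by positivity)
      (fun k => norm_nonneg _) hstep
  have hdist : ∀ k, ‖x k - xs‖ ≤ ‖gradient f (x k)‖ / μ := fun k => by
    rw [le_div_iff₀' hμ]
    simpa [hxs] using mul_norm_sub_le_norm_sub_of_fderiv hG hstrong xs (x k)
  refine ⟨hmono, tendsto_iff_norm_sub_tendsto_zero.mpr ?_⟩
  exact squeeze_zero (fun _ => norm_nonneg _) hdist (by simpa using hgrad.div_const μ)

theorem dan_monotone_and_convergence (p : ℕ) (hp : 1 ≤ p)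
    (f : EuclideanSpace ℝ (Fin p) → ℝ) (hf : ContDiff ℝ 2 f)
    (μ L : ℝ) (hμ : 0 < μ) (hL : 0 < L)
    (hstrong : ∀ x v : EuclideanSpace ℝ (Fin p),
      μ * ‖v‖ ^ 2 ≤ inner ℝ (fderiv ℝ (gradient f) x v) v)
    (hlip : ∀ x y : EuclideanSpace ℝ (Fin p),
      ‖fderiv ℝ (gradient f) x - fderiv ℝ (gradient f) y‖ ≤ L * ‖x - y‖)
    (xs : EuclideanSpace ℝ (Fin p)) (hxs : gradient f xs = 0)
    (x : ℕ → EuclideanSpace ℝ (Fin p)) (α : ℕ → ℝ)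
    (hα : ∀ k, α k = min 1 (μ ^ 2 / (L * ‖gradient f (x k)‖)))
    (hupd : ∀ k, fderiv ℝ (gradient f) (x k) (x (k + 1) - x k)
      = -(α k) • gradient f (x k)) :
    (∀ k, ‖gradient f (x (k + 1))‖ ≤ ‖gradient f (x k)‖) ∧
    Tendsto x atTop (nhds xs) :=
  dan_monotone_and_convergence_general p f hf μ L hμ hL hstrong hlip xs hxs x α hα hupd
end

section
/- Under the DAN (Polyak adaptive Newton) iteration, suppose 0 < γ < 1/2 and let ε be a real number with 0 < ε ≤ 2μ/L. Then for every natural number m ≥ 1 satisfying 2^m ≥ log(4μ/(Lε)) / log(1/γ), one has ‖x_{k₀+m} − x⋆‖ ≤ ε; in particular, O(log₂ log₂(1/ε)) iterations after step k₀ suffice to reach accuracy ε. -/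
open intervalIntegral MeasureTheory

theorem dan_taylor_half' {E : Type*} [NormedAddCommGroup E] [NormedSpace ℝ E] [CompleteSpace E]
    (G : E → E) (H : E → E →L[ℝ] E) (hG : ∀ z, HasFDerivAt G (H z) z)
    (hHc : Continuous H) (L : ℝ) (hL : 0 ≤ L)
    (hlip : ∀ a b : E, ‖H a - H b‖ ≤ L * ‖a - b‖) (x y : E) :
    ‖G y - G x - H x (y - x)‖ ≤ L / 2 * ‖y - x‖ ^ 2 := by
  set Δ := y - x with hΔ
  set ψ : ℝ → E := fun t => G (x + t • Δ) - t • (H x Δ) with hψdef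
  set ψ' : ℝ → E := fun t => H (x + t • Δ) Δ - H x Δ with hψ'def
  have hline : ∀ t : ℝ, HasDerivAt (fun s : ℝ => x + s • Δ) Δ t := fun t => by
    simpa using ((hasDerivAt_id t).smul_const Δ).const_add x
  have hd : ∀ t : ℝ, HasDerivAt ψ (ψ' t) t := by
    intro t
    have h1 : HasDerivAt (fun s : ℝ => G (x + s • Δ)) (H (x + t • Δ) Δ) t :=
      (hG _).comp_hasDerivAt t (hline t)
    have h2 := h1.sub ((hasDerivAt_id t).smul_const (H x Δ))
    rw [one_smul] at h2
    exact h2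
  have hc' : Continuous ψ' := by
    have hcomp : Continuous fun t : ℝ => H (x + t • Δ) :=
      hHc.comp (by continuity)
    exact (hcomp.clm_apply continuous_const).sub continuous_const
  have hFTC : ∫ t in (0:ℝ)..1, ψ' t = ψ 1 - ψ 0 :=
    integral_eq_sub_of_hasDerivAt (fun t _ => hd t) (hc'.intervalIntegrable 0 1)
  have hbound : ‖∫ t in (0:ℝ)..1, ψ' t‖ ≤ |∫ t in (0:ℝ)..1, L * ‖Δ‖ ^ 2 * t| := by
    apply intervalIntegral.norm_integral_le_abs_of_norm_le
    · filter_upwards [ae_restrict_mem measurableSet_uIoc] with t ht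
      rw [Set.uIoc_of_le (by norm_num : (0:ℝ) ≤ 1)] at ht
      have ht0 : 0 < t := ht.1
      have h1 : ‖ψ' t‖ ≤ ‖H (x + t • Δ) - H x‖ * ‖Δ‖ := by
        have := (H (x + t • Δ) - H x).le_opNorm Δ
        simpa [ψ', ContinuousLinearMap.sub_apply] using this
      have h2 : ‖H (x + t • Δ) - H x‖ ≤ L * (t * ‖Δ‖) := by
        have := hlip (x + t • Δ) x
        simpa [norm_smul, abs_of_pos ht0] using this
      calc ‖ψ' t‖ ≤ (L * (t * ‖Δ‖)) * ‖Δ‖ :=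
            h1.trans (mul_le_mul_of_nonneg_right h2 (norm_nonneg Δ))
        _ = L * ‖Δ‖ ^ 2 * t := by ring
    · exact (continuous_const.mul continuous_id).intervalIntegrable 0 1
  have hval : ∫ t in (0:ℝ)..1, L * ‖Δ‖ ^ 2 * t = L / 2 * ‖Δ‖ ^ 2 := by
    rw [intervalIntegral.integral_const_mul, integral_id]
    ring
  have hψ1 : ψ 1 - ψ 0 = G y - G x - H x Δ := by
    simp [ψ, hΔ]; abel
  rw [← hψ1, ← hFTC]
  rw [hval] at hbound
  calc ‖∫ t in (0:ℝ)..1, ψ' t‖ ≤ |L / 2 * ‖Δ‖ ^ 2| := hbound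
    _ = L / 2 * ‖Δ‖ ^ 2 := abs_of_nonneg (by positivity)




theorem dan_strong_mono' {E : Type*} [NormedAddCommGroup E] [InnerProductSpace ℝ E]
    [CompleteSpace E]
    (G : E → E) (H : E → E →L[ℝ] E) (hG : ∀ z, HasFDerivAt G (H z) z)
    (hHc : Continuous H) (μ : ℝ)
    (hst : ∀ z v, μ * ‖v‖ ^ 2 ≤ (inner ℝ (H z v) v : ℝ)) (x y : E) :
    μ * ‖y - x‖ ^ 2 ≤ (inner ℝ (G y - G x) (y - x) : ℝ) := by
  set Δ := y - x with hΔ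
  set φ : ℝ → ℝ := fun t => (inner ℝ (G (x + t • Δ)) Δ : ℝ) with hφdef
  set φ' : ℝ → ℝ := fun t => (inner ℝ (H (x + t • Δ) Δ) Δ : ℝ) with hφ'def
  have hline : ∀ t : ℝ, HasDerivAt (fun s : ℝ => x + s • Δ) Δ t := fun t => by
    simpa using ((hasDerivAt_id t).smul_const Δ).const_add x
  have hd : ∀ t : ℝ, HasDerivAt φ (φ' t) t := by
    intro t
    have h1 : HasDerivAt (fun s : ℝ => G (x + s • Δ)) (H (x + t • Δ) Δ) t :=
      (hG _).comp_hasDerivAt t (hline t)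
    simpa [φ, φ'] using h1.inner ℝ (hasDerivAt_const t Δ)
  have hc' : Continuous φ' := by
    have hcomp : Continuous fun t : ℝ => H (x + t • Δ) := hHc.comp (by continuity)
    exact (hcomp.clm_apply continuous_const).inner continuous_const
  have hFTC : ∫ t in (0:ℝ)..1, φ' t = φ 1 - φ 0 :=
    integral_eq_sub_of_hasDerivAt (fun t _ => hd t) (hc'.intervalIntegrable 0 1)
  have hmono : μ * ‖Δ‖ ^ 2 ≤ ∫ t in (0:ℝ)..1, φ' t := by
    have : ∫ t in (0:ℝ)..1, μ * ‖Δ‖ ^ 2 ≤ ∫ t in (0:ℝ)..1, φ' t := by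
      apply intervalIntegral.integral_mono_on (by norm_num)
        (intervalIntegrable_const) (hc'.intervalIntegrable 0 1)
      intro t _
      exact hst _ _
    simpa using this
  have hφ1 : φ 1 - φ 0 = (inner ℝ (G y - G x) Δ : ℝ) := by
    simp [φ, hΔ, inner_sub_left]
  rw [hFTC, hφ1] at hmono
  exact hmono


theorem dan_seq_bound' (u : ℕ → ℝ) (hpos : ∀ k, 0 ≤ u k)
    (hstep1 : ∀ k, u k ≤ 1 / 2 → u (k + 1) ≤ (u k) ^ 2)
    (hstep2 : ∀ k, 1 / 2 ≤ u k → u (k + 1) ≤ u k - 1 / 4)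
    (k₀ : ℕ) (γ : ℝ) (hγ0 : 0 < γ) (hγh : γ < 1 / 2)
    (hγ4 : k₀ = 0 ∨ 1 / 4 < γ)
    (hu0 : u 0 = γ + (k₀ : ℝ) / 4)
    (m : ℕ) : u (k₀ + m) ≤ γ ^ (2 ^ m) := by
  have hk0 : u k₀ ≤ γ := by
    have key : ∀ k, k ≤ k₀ → u k ≤ γ + ((k₀ - k : ℕ) : ℝ) / 4 := by
      intro k
      induction k with
      | zero => intro _; simp [hu0]
      | succ n ih =>
        intro hle
        have hn : n ≤ k₀ := Nat.le_of_succ_le hle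
        have ihn := ih hn
        have hγ4' : 1 / 4 < γ := by
          rcases hγ4 with h0 | h4
          · omega
          · exact h4
        have hcast : ((k₀ - n : ℕ) : ℝ) = ((k₀ - (n + 1) : ℕ) : ℝ) + 1 := by
          have h : k₀ - n = (k₀ - (n + 1)) + 1 := by omega
          rw [h]; push_cast; ring
        have hnn : (0 : ℝ) ≤ ((k₀ - (n + 1) : ℕ) : ℝ) := Nat.cast_nonneg _
        rcases le_or_gt (u n) (1 / 2) with h | h
        · have h1 := hstep1 n h
          have h2 : u (n + 1) ≤ 1 / 4 := by nlinarith [hpos n]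
          linarith
        · have h1 := hstep2 n h.le
          rw [hcast] at ihn
          linarith
    have := key k₀ le_rfl
    simpa using this
  have hph : ∀ i, u (k₀ + i) ≤ γ ^ (2 ^ i) := by
    intro i
    induction i with
    | zero => simpa using hk0
    | succ n ih =>
      have hle : γ ^ (2 ^ n) ≤ γ := by
        calc γ ^ (2 ^ n) ≤ γ ^ 1 :=
              pow_le_pow_of_le_one hγ0.le (by linarith) Nat.one_le_two_pow
          _ = γ := pow_one γ
      have h2 : u (k₀ + n) ≤ 1 / 2 := le_trans ih (le_trans hle (by linarith))
      have h3 := hstep1 (k₀ + n) h2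
      have h4 : u (k₀ + n) ^ 2 ≤ (γ ^ (2 ^ n)) ^ 2 := by
        have := hpos (k₀ + n)
        nlinarith
      calc u (k₀ + (n + 1)) = u ((k₀ + n) + 1) := by ring_nf
        _ ≤ (u (k₀ + n)) ^ 2 := h3
        _ ≤ (γ ^ (2 ^ n)) ^ 2 := h4
        _ = γ ^ (2 ^ (n + 1)) := by rw [← pow_mul, pow_succ]
  exact hph m

set_option maxHeartbeats 1000000 in
theorem dan_step' (p : ℕ) (hp : 1 ≤ p)
    (f : EuclideanSpace ℝ (Fin p) → ℝ) (hf : ContDiff ℝ 2 f)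
    (μ L : ℝ) (hμ : 0 < μ) (hL : 0 < L)
    (hstrong : ∀ x v : EuclideanSpace ℝ (Fin p),
      μ * ‖v‖ ^ 2 ≤ inner ℝ (fderiv ℝ (gradient f) x v) v)
    (hlip : ∀ x y : EuclideanSpace ℝ (Fin p),
      ‖fderiv ℝ (gradient f) x - fderiv ℝ (gradient f) y‖ ≤ L * ‖x - y‖)
    (xs : EuclideanSpace ℝ (Fin p)) (hxs : gradient f xs = 0)
    (x : ℕ → EuclideanSpace ℝ (Fin p)) (α : ℕ → ℝ)
    (hα : ∀ k, α k = min 1 (μ ^ 2 / (L * ‖gradient f (x k)‖)))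
    (hupd : ∀ k, fderiv ℝ (gradient f) (x k) (x (k + 1) - x k)
      = -(α k) • gradient f (x k)) :
    ∀ k, ‖gradient f (x (k+1))‖ ≤
      (1 - α k) * ‖gradient f (x k)‖ + L / 2 * (α k * ‖gradient f (x k)‖ / μ) ^ 2 := by
  intro k
  have hG1 : ContDiff ℝ 1 (gradient f) := by
    have hfd : ContDiff ℝ 1 (fderiv ℝ f) := hf.fderiv_right (by norm_num)
    exact ((InnerProductSpace.toDual ℝ _).symm.contDiff).comp hfd
  have hGd : ∀ z, HasFDerivAt (gradient f) (fderiv ℝ (gradient f) z) z := fun z =>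
    (hG1.differentiable one_ne_zero z).hasFDerivAt
  have hHc : Continuous (fun z => fderiv ℝ (gradient f) z) := hG1.continuous_fderiv one_ne_zero
  have ha0 : 0 ≤ α k := by
    rw [hα k]; exact le_min zero_le_one (by positivity)
  have ha1 : α k ≤ 1 := by rw [hα k]; exact min_le_left _ _
  set Δ := x (k + 1) - x k with hΔdef
  have hΔ : ‖Δ‖ ≤ α k * ‖gradient f (x k)‖ / μ := by
    have h1 : μ * ‖Δ‖ ^ 2 ≤ (inner ℝ (fderiv ℝ (gradient f) (x k) Δ) Δ : ℝ) := hstrong _ _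
    rw [hupd k] at h1
    have h2 : (inner ℝ ((-(α k)) • gradient f (x k)) Δ : ℝ)
        = -(α k) * (inner ℝ (gradient f (x k)) Δ : ℝ) := real_inner_smul_left _ _ _
    rw [h2] at h1
    have habs : |(inner ℝ (gradient f (x k)) Δ : ℝ)| ≤ ‖gradient f (x k)‖ * ‖Δ‖ :=
      abs_real_inner_le_norm _ _
    have h4 : μ * ‖Δ‖ ^ 2 ≤ α k * ‖gradient f (x k)‖ * ‖Δ‖ := by
      nlinarith [neg_abs_le (inner ℝ (gradient f (x k)) Δ : ℝ),
        abs_nonneg (inner ℝ (gradient f (x k)) Δ : ℝ)]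
    rcases eq_or_lt_of_le (norm_nonneg Δ) with h0 | h0
    · rw [← h0]; positivity
    · rw [le_div_iff₀ hμ]
      nlinarith
  have hT : ‖gradient f (x (k + 1)) - gradient f (x k) - fderiv ℝ (gradient f) (x k) Δ‖
      ≤ L / 2 * ‖Δ‖ ^ 2 := by
    have := dan_taylor_half' (gradient f) (fun z => fderiv ℝ (gradient f) z) hGd hHc L hL.le
      hlip (x k) (x (k + 1))
    rw [hΔdef]
    simpa using this
  have hrw : gradient f (x (k + 1)) =
      (gradient f (x (k + 1)) - gradient f (x k) - fderiv ℝ (gradient f) (x k) Δ)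
        + (1 - α k) • gradient f (x k) := by
    rw [hupd k]
    module
  calc ‖gradient f (x (k + 1))‖
      ≤ ‖gradient f (x (k + 1)) - gradient f (x k) - fderiv ℝ (gradient f) (x k) Δ‖
        + ‖(1 - α k) • gradient f (x k)‖ := by
          conv_lhs => rw [hrw]
          exact norm_add_le _ _
    _ ≤ L / 2 * ‖Δ‖ ^ 2 + (1 - α k) * ‖gradient f (x k)‖ := by
        rw [norm_smul, Real.norm_eq_abs, abs_of_nonneg (by linarith)]
        exact add_le_add hT le_rfl
    _ ≤ (1 - α k) * ‖gradient f (x k)‖ + L / 2 * (α k * ‖gradient f (x k)‖ / μ) ^ 2 := by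
        have h5 : ‖Δ‖ ^ 2 ≤ (α k * ‖gradient f (x k)‖ / μ) ^ 2 :=
          pow_le_pow_left₀ (norm_nonneg Δ) hΔ 2
        have h6 : L / 2 * ‖Δ‖ ^ 2 ≤ L / 2 * (α k * ‖gradient f (x k)‖ / μ) ^ 2 :=
          mul_le_mul_of_nonneg_left h5 (by positivity)
        linarith


open Filter Topology

set_option maxHeartbeats 2400000 in
theorem dan_iteration_complexity (p : ℕ) (hp : 1 ≤ p)
    (f : EuclideanSpace ℝ (Fin p) → ℝ) (hf : ContDiff ℝ 2 f)
    (μ L : ℝ) (hμ : 0 < μ) (hL : 0 < L)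
    (hstrong : ∀ x v : EuclideanSpace ℝ (Fin p),
      μ * ‖v‖ ^ 2 ≤ inner ℝ (fderiv ℝ (gradient f) x v) v)
    (hlip : ∀ x y : EuclideanSpace ℝ (Fin p),
      ‖fderiv ℝ (gradient f) x - fderiv ℝ (gradient f) y‖ ≤ L * ‖x - y‖)
    (xs : EuclideanSpace ℝ (Fin p)) (hxs : gradient f xs = 0)
    (x : ℕ → EuclideanSpace ℝ (Fin p)) (α : ℕ → ℝ)
    (hα : ∀ k, α k = min 1 (μ ^ 2 / (L * ‖gradient f (x k)‖)))
    (hupd : ∀ k, fderiv ℝ (gradient f) (x k) (x (k + 1) - x k)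
      = -(α k) • gradient f (x k))
    (k₀ : ℕ) (hk₀ : (k₀ : ℤ) = max 0 (⌈2 * L / μ ^ 2 * ‖gradient f (x 0)‖⌉ - 2))
    (γ : ℝ) (hγ : γ = L / (2 * μ ^ 2) * ‖gradient f (x 0)‖ - (k₀ : ℝ) / 4)
    (hγ0 : 0 < γ) (hγhalf : γ < 1 / 2)
    (ε : ℝ) (hε0 : 0 < ε) (hε1 : ε ≤ 2 * μ / L)
    (m : ℕ) (hm : 1 ≤ m)
    (hm2 : Real.log (4 * μ / (L * ε)) / Real.log (1 / γ) ≤ (2 : ℝ) ^ m) :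
    ‖x (k₀ + m) - xs‖ ≤ ε := by
  have hμ2 : (0:ℝ) < μ ^ 2 := by positivity
  set c : ℝ := L / (2 * μ ^ 2) with hc
  have hc0 : 0 < c := by positivity
  set u : ℕ → ℝ := fun k => c * ‖gradient f (x k)‖ with hu
  have hupos : ∀ k, 0 ≤ u k := fun k => by positivity
  have hstep := dan_step' p hp f hf μ L hμ hL hstrong hlip xs hxs x α hα hupd
  -- step 1 : quadratic regime
  have hstep1 : ∀ k, u k ≤ 1 / 2 → u (k + 1) ≤ (u k) ^ 2 := by
    intro k hk
    have hs := hstep k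
    rcases eq_or_lt_of_le (norm_nonneg (gradient f (x k))) with h0 | h0
    · have hα0 : α k = 0 := by
        rw [hα k, ← h0]
        norm_num
      rw [hα0] at hs
      simp only [← h0] at hs
      norm_num at hs
      have hzero : u (k + 1) = 0 := by simp [hu, hs]
      rw [hzero]
      positivity
    · have hle : L * ‖gradient f (x k)‖ ≤ μ ^ 2 := by
        have h2 : c * ‖gradient f (x k)‖ ≤ 1 / 2 := hk
        rw [hc, div_mul_eq_mul_div, div_le_div_iff₀ (by positivity) (by norm_num)] at h2
        nlinarith
      have hα1 : α k = 1 := by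
        rw [hα k, min_eq_left]
        rw [le_div_iff₀ (by positivity)]
        nlinarith
      rw [hα1] at hs
      have heq : (1 - 1) * ‖gradient f (x k)‖ + L / 2 * (1 * ‖gradient f (x k)‖ / μ) ^ 2
          = c * ‖gradient f (x k)‖ ^ 2 := by
        rw [hc]
        field_simp
        ring
      rw [heq] at hs
      have h1 : u (k + 1) = c * ‖gradient f (x (k + 1))‖ := rfl
      have h2 : u k = c * ‖gradient f (x k)‖ := rfl
      rw [h1, h2]
      calc c * ‖gradient f (x (k + 1))‖ ≤ c * (c * ‖gradient f (x k)‖ ^ 2) :=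
            mul_le_mul_of_nonneg_left hs hc0.le
        _ = (c * ‖gradient f (x k)‖) ^ 2 := by ring
  -- step 2 : damped regime
  have hstep2 : ∀ k, 1 / 2 ≤ u k → u (k + 1) ≤ u k - 1 / 4 := by
    intro k hk
    have hgpos : 0 < ‖gradient f (x k)‖ := by
      by_contra h
      push_neg at h
      have : u k ≤ 0 := mul_nonpos_of_nonneg_of_nonpos hc0.le h
      linarith
    have hglarge : μ ^ 2 ≤ L * ‖gradient f (x k)‖ := by
      have : (1:ℝ) / 2 ≤ c * ‖gradient f (x k)‖ := hk
      rw [hc, div_mul_eq_mul_div, div_le_div_iff₀ (by norm_num) (by positivity)] at this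
      nlinarith
    have hgne : ‖gradient f (x k)‖ ≠ 0 := ne_of_gt hgpos
    have hα2 : α k = μ ^ 2 / (L * ‖gradient f (x k)‖) := by
      rw [hα k, min_eq_right]
      rw [div_le_one (by positivity)]
      exact hglarge
    have hs := hstep k
    rw [hα2] at hs
    have heq : (1 - μ ^ 2 / (L * ‖gradient f (x k)‖)) * ‖gradient f (x k)‖
        + L / 2 * (μ ^ 2 / (L * ‖gradient f (x k)‖) * ‖gradient f (x k)‖ / μ) ^ 2
        = ‖gradient f (x k)‖ - μ ^ 2 / (2 * L) := by
      field_simp [hgne]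
      ring
    rw [heq] at hs
    have h1 : u (k + 1) = c * ‖gradient f (x (k + 1))‖ := rfl
    have h2 : u k = c * ‖gradient f (x k)‖ := rfl
    rw [h1, h2]
    have h3 : c * ‖gradient f (x (k + 1))‖ ≤ c * (‖gradient f (x k)‖ - μ ^ 2 / (2 * L)) :=
      mul_le_mul_of_nonneg_left hs hc0.le
    have h4 : c * (μ ^ 2 / (2 * L)) = 1 / 4 := by
      rw [hc]; field_simp; ring
    have h5 : c * (‖gradient f (x k)‖ - μ ^ 2 / (2 * L))
        = c * ‖gradient f (x k)‖ - c * (μ ^ 2 / (2 * L)) := by ring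
    rw [h5, h4] at h3
    exact h3
  -- initial value
  have hu0 : u 0 = γ + (k₀ : ℝ) / 4 := by
    have h1 : u 0 = c * ‖gradient f (x 0)‖ := rfl
    rw [h1, hγ]
    ring
  -- γ > 1/4 unless k₀ = 0
  have hγ4 : k₀ = 0 ∨ 1 / 4 < γ := by
    rcases Nat.eq_zero_or_pos k₀ with h | h
    · exact Or.inl h
    · right
      have hk1 : (1 : ℤ) ≤ (k₀ : ℤ) := by exact_mod_cast h
      have hce : ⌈2 * L / μ ^ 2 * ‖gradient f (x 0)‖⌉ = (k₀ : ℤ) + 2 := by omega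
      have hclt : ((k₀ : ℝ) + 2) < 2 * L / μ ^ 2 * ‖gradient f (x 0)‖ + 1 := by
        have h1 := Int.ceil_lt_add_one (2 * L / μ ^ 2 * ‖gradient f (x 0)‖)
        rw [hce] at h1
        push_cast at h1
        linarith
      have hsc : c * ‖gradient f (x 0)‖
          = (2 * L / μ ^ 2 * ‖gradient f (x 0)‖) / 4 := by
        rw [hc]
        field_simp
        ring
      rw [hγ, hsc]
      linarith
  have hfinal := dan_seq_bound' u hupos hstep1 hstep2 k₀ γ hγ0 hγhalf hγ4 hu0 m
  -- strong convexity: distance bound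
  set N := k₀ + m with hN
  have hG1 : ContDiff ℝ 1 (gradient f) := by
    have hfd : ContDiff ℝ 1 (fderiv ℝ f) := hf.fderiv_right (by norm_num)
    have h2 : ContDiff ℝ 1 (fun z : EuclideanSpace ℝ (Fin p) =>
        (InnerProductSpace.toDual ℝ (EuclideanSpace ℝ (Fin p))).symm (fderiv ℝ f z)) :=
      (InnerProductSpace.toDual ℝ (EuclideanSpace ℝ (Fin p))).symm.contDiff.comp hfd
    exact h2
  have hGd : ∀ z, HasFDerivAt (gradient f) (fderiv ℝ (gradient f) z) z := fun z =>
    (hG1.differentiable one_ne_zero z).hasFDerivAt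
  have hHc : Continuous (fun z => fderiv ℝ (gradient f) z) := hG1.continuous_fderiv one_ne_zero
  have hsm := dan_strong_mono' (gradient f) (fun z => fderiv ℝ (gradient f) z) hGd hHc μ
    hstrong xs (x N)
  rw [hxs, sub_zero] at hsm
  have hcs : (inner ℝ (gradient f (x N)) (x N - xs) : ℝ)
      ≤ ‖gradient f (x N)‖ * ‖x N - xs‖ := real_inner_le_norm _ _
  have hdist : μ * ‖x N - xs‖ ^ 2 ≤ ‖gradient f (x N)‖ * ‖x N - xs‖ := le_trans hsm hcs
  -- γ ^ 2^m ≤ L ε / (4 μ)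
  have hγpow : γ ^ (2 ^ m) ≤ L * ε / (4 * μ) := by
    have hinv : (1:ℝ) < 1 / γ := by
      rw [lt_div_iff₀ hγ0]; linarith
    have hlog1 : 0 < Real.log (1 / γ) := Real.log_pos hinv
    have h1 : Real.log (4 * μ / (L * ε)) ≤ (2:ℝ) ^ m * Real.log (1 / γ) := by
      rw [div_le_iff₀ hlog1] at hm2
      linarith
    have h2 : Real.log (4 * μ / (L * ε)) ≤ Real.log ((1 / γ) ^ (2 ^ m)) := by
      rw [Real.log_pow]
      push_cast
      linarith
    have hpos1 : (0:ℝ) < 4 * μ / (L * ε) := by positivity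
    have hpos2 : (0:ℝ) < (1 / γ) ^ (2 ^ m) := by positivity
    have h3 : 4 * μ / (L * ε) ≤ (1 / γ) ^ (2 ^ m) :=
      (Real.log_le_log_iff hpos1 hpos2).mp h2
    have h4 : (1 / γ : ℝ) ^ (2 ^ m) = 1 / γ ^ (2 ^ m) := by
      rw [one_div, one_div, inv_pow]
    rw [h4, div_le_div_iff₀ (by positivity) (by positivity)] at h3
    rw [le_div_iff₀ (by positivity)]
    nlinarith [pow_pos hγ0 (2 ^ m)]
  -- conclude
  have hgN : ‖gradient f (x N)‖ ≤ 2 * μ ^ 2 / L * (L * ε / (4 * μ)) := by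
    have h1 : c * ‖gradient f (x N)‖ ≤ L * ε / (4 * μ) := le_trans hfinal hγpow
    rw [hc] at h1
    rw [← le_div_iff₀' (by positivity : (0:ℝ) < L / (2 * μ ^ 2))] at h1
    calc ‖gradient f (x N)‖ ≤ (L * ε / (4 * μ)) / (L / (2 * μ ^ 2)) := h1
      _ = 2 * μ ^ 2 / L * (L * ε / (4 * μ)) := by field_simp
  have hgN2 : ‖gradient f (x N)‖ ≤ μ * ε / 2 := by
    have : 2 * μ ^ 2 / L * (L * ε / (4 * μ)) = μ * ε / 2 := by field_simp; ring
    linarith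
  rcases eq_or_lt_of_le (norm_nonneg (x N - xs)) with h0 | h0
  · rw [← h0]; linarith
  · have h5 : μ * ‖x N - xs‖ ≤ ‖gradient f (x N)‖ := by
      nlinarith
    have h6 : μ * ‖x N - xs‖ ≤ μ * ε := by nlinarith
    nlinarith
end

section
/- Let x ∈ E, let α ∈ [0, 1], and let z ∈ E satisfy ∇²f(x) z = −α ∇f(x). Then ‖∇f(x + z)‖ ≤ (1 − α)·‖∇f(x)‖ + (L·α²/(2μ²))·‖∇f(x)‖². -/
open InnerProductSpace Set

/-!
Write `g = ∇f` and `H = ∇²f(x)`. Since `H z = -α g(x)`, we have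
`g(x + z) = (1 - α) g(x) + (g(x + z) - g(x) - H z)`, and the Lipschitz Hessian bounds the
Taylor remainder by `L ‖z‖² / 2`. Strong convexity gives `μ ‖z‖ ≤ ‖H z‖ = α ‖g(x)‖`, which turns
this into the quadratic term.
-/

theorem ContDiff.gradient {F : Type*} [NormedAddCommGroup F] [InnerProductSpace ℝ F]
    [CompleteSpace F] {f : F → ℝ} {m n : WithTop ℕ∞} (hf : ContDiff ℝ n f) (hmn : m + 1 ≤ n) :
    ContDiff ℝ m (gradient f) :=
  (toDual ℝ F).symm.contDiff.comp (hf.fderiv_right hmn)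

theorem norm_mul_le_norm_apply_of_le_inner {E : Type*} [NormedAddCommGroup E]
    [InnerProductSpace ℝ E] {A : E →L[ℝ] E} {v : E} {μ : ℝ}
    (hA : μ * ‖v‖ ^ 2 ≤ inner ℝ (A v) v) : μ * ‖v‖ ≤ ‖A v‖ := by
  rcases (norm_nonneg v).eq_or_lt with hv | hv
  · simp [← hv]
  · have h : μ * ‖v‖ * ‖v‖ ≤ ‖A v‖ * ‖v‖ := by
      calc μ * ‖v‖ * ‖v‖ = μ * ‖v‖ ^ 2 := by ring
        _ ≤ inner ℝ (A v) v := hA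
        _ ≤ ‖A v‖ * ‖v‖ := real_inner_le_norm _ _
    exact le_of_mul_le_mul_right h hv

theorem norm_sub_sub_fderiv_apply_le_of_lipschitz {E F : Type*} [NormedAddCommGroup E]
    [NormedSpace ℝ E] [NormedAddCommGroup F] [NormedSpace ℝ F] {g : E → F}
    {g' : E → E →L[ℝ] F} {L : ℝ} {x : E} (hg : ∀ y, HasFDerivAt g (g' y) y)
    (hlip : ∀ y, ‖g' y - g' x‖ ≤ L * ‖y - x‖) (z : E) :
    ‖g (x + z) - g x - g' x z‖ ≤ L / 2 * ‖z‖ ^ 2 := by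
  set ψ : ℝ → F := fun t => g (x + t • z) - g x - t • g' x z
  have hψ : ∀ t, HasDerivAt ψ (g' (x + t • z) z - g' x z) t := by
    intro t
    have hline : HasDerivAt (fun t : ℝ => x + t • z) z t := by
      simpa using ((hasDerivAt_id t).smul_const z).const_add x
    have := ((hg _).comp_hasDerivAt t hline).sub_const (g x)
    have hlin : HasDerivAt (fun t : ℝ => t • g' x z) (g' x z) t := by
      simpa using (hasDerivAt_id t).smul_const (g' x z)
    exact this.sub hlin
  have hB : ∀ t, HasDerivAt (fun t => L / 2 * ‖z‖ ^ 2 * t ^ 2) (L * ‖z‖ ^ 2 * t) t := by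
    intro t
    exact ((hasDerivAt_pow 2 t).const_mul (L / 2 * ‖z‖ ^ 2)).congr_deriv (by ring)
  have hbound : ∀ t ∈ Ico (0 : ℝ) 1, ‖g' (x + t • z) z - g' x z‖ ≤ L * ‖z‖ ^ 2 * t := by
    intro t ht
    calc ‖g' (x + t • z) z - g' x z‖ = ‖(g' (x + t • z) - g' x) z‖ := rfl
      _ ≤ ‖g' (x + t • z) - g' x‖ * ‖z‖ := ContinuousLinearMap.le_opNorm _ _
      _ ≤ L * ‖t • z‖ * ‖z‖ := by
          gcongr
          simpa using hlip (x + t • z)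
      _ = L * ‖z‖ ^ 2 * t := by rw [norm_smul, Real.norm_of_nonneg ht.1]; ring
  have := image_norm_le_of_norm_deriv_right_le_deriv_boundary
    (fun t _ => (hψ t).continuousAt.continuousWithinAt) (fun t _ => (hψ t).hasDerivWithinAt)
    (by simp [ψ]) hB hbound (right_mem_Icc.2 zero_le_one)
  simpa [ψ] using this

theorem adaptive_newton_one_step_general (p : ℕ)
    (f : EuclideanSpace ℝ (Fin p) → ℝ) (hf : ContDiff ℝ 2 f)
    (μ L : ℝ) (hμ : 0 < μ) (hL : 0 < L)
    (hstrong : ∀ x v : EuclideanSpace ℝ (Fin p),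
      μ * ‖v‖ ^ 2 ≤ inner ℝ (fderiv ℝ (gradient f) x v) v)
    (hlip : ∀ x y : EuclideanSpace ℝ (Fin p),
      ‖fderiv ℝ (gradient f) x - fderiv ℝ (gradient f) y‖ ≤ L * ‖x - y‖)
    (x z : EuclideanSpace ℝ (Fin p)) (α : ℝ) (hα0 : 0 ≤ α) (hα1 : α ≤ 1)
    (hz : fderiv ℝ (gradient f) x z = -α • gradient f x) :
    ‖gradient f (x + z)‖ ≤
      (1 - α) * ‖gradient f x‖ + L * α ^ 2 / (2 * μ ^ 2) * ‖gradient f x‖ ^ 2 := by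
  have hg : Differentiable ℝ (gradient f) :=
    (hf.gradient (m := 1) le_rfl).differentiable one_ne_zero
  have htaylor := norm_sub_sub_fderiv_apply_le_of_lipschitz (fun y => (hg y).hasFDerivAt)
    (fun y => hlip y x) z
  have hstep : μ * ‖z‖ ≤ α * ‖gradient f x‖ := by
    simpa [hz, norm_smul, abs_of_nonneg hα0] using norm_mul_le_norm_apply_of_le_inner (hstrong x z)
  have hz_sq : μ ^ 2 * ‖z‖ ^ 2 ≤ α ^ 2 * ‖gradient f x‖ ^ 2 := by
    rw [← mul_pow, ← mul_pow]
    exact pow_le_pow_left₀ (by positivity) hstep 2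
  have hquad : L / 2 * ‖z‖ ^ 2 ≤ L * α ^ 2 / (2 * μ ^ 2) * ‖gradient f x‖ ^ 2 :=
    calc L / 2 * ‖z‖ ^ 2 = L / (2 * μ ^ 2) * (μ ^ 2 * ‖z‖ ^ 2) := by field_simp
      _ ≤ L / (2 * μ ^ 2) * (α ^ 2 * ‖gradient f x‖ ^ 2) := by gcongr
      _ = L * α ^ 2 / (2 * μ ^ 2) * ‖gradient f x‖ ^ 2 := by ring
  have hsplit : gradient f (x + z) = (1 - α) • gradient f x +
      (gradient f (x + z) - gradient f x - fderiv ℝ (gradient f) x z) := by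
    rw [hz]; module
  calc ‖gradient f (x + z)‖
      ≤ ‖(1 - α) • gradient f x‖ + L / 2 * ‖z‖ ^ 2 := by
        rw [hsplit]; exact (norm_add_le _ _).trans (add_le_add_right htaylor _)
    _ ≤ (1 - α) * ‖gradient f x‖ + L * α ^ 2 / (2 * μ ^ 2) * ‖gradient f x‖ ^ 2 := by
        rw [norm_smul, Real.norm_of_nonneg (by linarith)]
        exact add_le_add_right hquad _

theorem adaptive_newton_one_step (p : ℕ) (hp : 1 ≤ p)
    (f : EuclideanSpace ℝ (Fin p) → ℝ) (hf : ContDiff ℝ 2 f)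
    (μ L : ℝ) (hμ : 0 < μ) (hL : 0 < L)
    (hstrong : ∀ x v : EuclideanSpace ℝ (Fin p),
      μ * ‖v‖ ^ 2 ≤ inner ℝ (fderiv ℝ (gradient f) x v) v)
    (hlip : ∀ x y : EuclideanSpace ℝ (Fin p),
      ‖fderiv ℝ (gradient f) x - fderiv ℝ (gradient f) y‖ ≤ L * ‖x - y‖)
    (x z : EuclideanSpace ℝ (Fin p)) (α : ℝ) (hα0 : 0 ≤ α) (hα1 : α ≤ 1)
    (hz : fderiv ℝ (gradient f) x z = -α • gradient f x) :
    ‖gradient f (x + z)‖ ≤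
      (1 - α) * ‖gradient f x‖ + L * α ^ 2 / (2 * μ ^ 2) * ‖gradient f x‖ ^ 2 :=
  adaptive_newton_one_step_general p f hf μ L hμ hL hstrong hlip x z α hα0 hα1 hz
end

section
/- Given constants 0 < μ ≤ M, L > 0 and c > 0, the stepsize constant φ = 2μ(μ − r̲)²/(L(M + μ)) − 2r̲(μ − r̲)/L is strictly positive. -/
/-!
Write `s = √(M_c² + 3μ²)`, so that `r̲ = (s - M_c)/3` satisfies `r̲ (s + M_c) = μ²` and `r̲ > 0`.
Over the common denominator `L (M + μ)`, `φ = 2 (μ - r̲) (μ² - r̲ (M + 2μ)) / (L (M + μ))`, so it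
suffices that `r̲ (M + 2μ) < μ²` (which also forces `r̲ < μ`), i.e. `M + 2μ < s + M_c`. Squaring,
this is `(2μ - c)² < (M + c)² + 3μ²`, and the gap is at least `6μc > 0`.
-/

open Real

lemma sqrt_sq_add_three_mul_sq_sub_mul_add (a b : ℝ) :
    (√(a ^ 2 + 3 * b ^ 2) - a) / 3 * (√(a ^ 2 + 3 * b ^ 2) + a) = b ^ 2 := by
  linear_combination Real.sq_sqrt (by positivity : 0 ≤ a ^ 2 + 3 * b ^ 2) / 3

lemma lt_sqrt_sq_add_three_mul_sq {b : ℝ} (a : ℝ) (hb : b ≠ 0) : a < √(a ^ 2 + 3 * b ^ 2) :=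
  lt_sqrt_of_sq_lt (by linarith [sq_pos_of_ne_zero hb])

lemma add_two_mul_lt_sqrt_add {μ M c : ℝ} (hμ : 0 < μ) (hμM : μ ≤ M) (hc : 0 < c) :
    M + 2 * μ < √((M + c) ^ 2 + 3 * μ ^ 2) + (M + c) := by
  have hsq : (2 * μ - c) ^ 2 < (M + c) ^ 2 + 3 * μ ^ 2 := by
    have hle : (μ + c) ^ 2 ≤ (M + c) ^ 2 := by gcongr
    nlinarith [mul_pos hμ hc]
  linarith [lt_sqrt_of_sq_lt hsq]

lemma two_mul_sq_div_sub_two_mul_div {μ M L r : ℝ} (hL : L ≠ 0) (hMμ : M + μ ≠ 0) :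
    2 * μ * (μ - r) ^ 2 / (L * (M + μ)) - 2 * r * (μ - r) / L =
      2 * (μ - r) * (μ ^ 2 - r * (M + 2 * μ)) / (L * (M + μ)) := by
  field_simp
  ring

lemma lt_of_mul_add_two_mul_lt_sq {μ M r : ℝ} (hμ : 0 < μ) (hMμ : 0 < M + μ)
    (h : r * (M + 2 * μ) < μ ^ 2) : r < μ := by
  by_contra! hμr
  nlinarith [mul_le_mul_of_nonneg_right hμr (by linarith : 0 ≤ M + 2 * μ)]

lemma two_mul_sq_div_sub_two_mul_div_pos {μ M L r : ℝ} (hμ : 0 < μ) (hMμ : 0 < M + μ)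
    (hL : 0 < L) (h : r * (M + 2 * μ) < μ ^ 2) :
    0 < 2 * μ * (μ - r) ^ 2 / (L * (M + μ)) - 2 * r * (μ - r) / L := by
  rw [two_mul_sq_div_sub_two_mul_div hL.ne' hMμ.ne']
  have hrμ := lt_of_mul_add_two_mul_lt_sq hμ hMμ h
  have : 0 < μ ^ 2 - r * (M + 2 * μ) := sub_pos.mpr h
  have : 0 < μ - r := sub_pos.mpr hrμ
  positivity

theorem danla_phi_pos (μ M L c : ℝ) (hμ : 0 < μ) (hμM : μ ≤ M) (hL : 0 < L) (hc : 0 < c)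
    (Mc r φ : ℝ) (hMc : Mc = M + c)
    (hr : r = (Real.sqrt (Mc ^ 2 + 3 * μ ^ 2) - Mc) / 3)
    (hφ : φ = 2 * μ * (μ - r) ^ 2 / (L * (M + μ)) - 2 * r * (μ - r) / L) :
    0 < φ := by
  subst hφ
  have hr_pos : 0 < r := by
    rw [hr]
    linarith [lt_sqrt_sq_add_three_mul_sq Mc hμ.ne']
  have hr_mul : r * (√(Mc ^ 2 + 3 * μ ^ 2) + Mc) = μ ^ 2 := by
    rw [hr, sqrt_sq_add_three_mul_sq_sub_mul_add]
  have hgap : r * (M + 2 * μ) < μ ^ 2 := by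
    rw [← hr_mul, hMc]
    exact mul_lt_mul_of_pos_left (add_two_mul_lt_sqrt_add hμ hμM hc) hr_pos
  exact two_mul_sq_div_sub_two_mul_div_pos hμ (by linarith) hL hgap
end

section
/- Given constants 0 < μ ≤ M, L > 0 and c > 0, one has (L·φ + 2r̲(M + r̲)) / (2(μ − r̲)²) < μ/(M + μ) + 1/2 ≤ 1. -/
/-! After substituting `φ`, the factor splits as `μ/(M+μ) + r̲(M + 2r̲ - μ)/(μ - r̲)²`.
Since `r̲` is the positive root of `3r² + 2M_c r = μ²`, the second term is below `1/2` exactly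
because `3r̲² + 2r̲M < μ²`, i.e. because `M < M_c`. -/

open Real

section QuadraticRoot

variable {a b r : ℝ}

theorem three_mul_sq_add_two_mul_eq_of_eq_sqrt (hr : r = (√(a ^ 2 + 3 * b ^ 2) - a) / 3) :
    3 * r ^ 2 + 2 * a * r = b ^ 2 := by
  have hs : √(a ^ 2 + 3 * b ^ 2) ^ 2 = a ^ 2 + 3 * b ^ 2 := sq_sqrt (by positivity)
  subst hr
  linear_combination hs / 3

theorem pos_of_eq_sqrt (hb : b ≠ 0) (hr : r = (√(a ^ 2 + 3 * b ^ 2) - a) / 3) : 0 < r := by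
  have hs : √(a ^ 2 + 3 * b ^ 2) ^ 2 = a ^ 2 + 3 * b ^ 2 := sq_sqrt (by positivity)
  have hb2 : 0 < b ^ 2 := by positivity
  have : a < √(a ^ 2 + 3 * b ^ 2) := by nlinarith [sqrt_nonneg (a ^ 2 + 3 * b ^ 2)]
  rw [hr]
  linarith

theorem lt_of_three_mul_sq_add_two_mul_eq (ha : 0 ≤ a) (hb : 0 < b) (hr : 0 < r)
    (hq : 3 * r ^ 2 + 2 * a * r = b ^ 2) : r < b := by
  nlinarith

end QuadraticRoot

theorem damped_factor_eq {μ M L r : ℝ} (hL : L ≠ 0) (hMμ : M + μ ≠ 0) (hrμ : μ - r ≠ 0) :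
    (L * (2 * μ * (μ - r) ^ 2 / (L * (M + μ)) - 2 * r * (μ - r) / L) + 2 * r * (M + r)) /
        (2 * (μ - r) ^ 2) = μ / (M + μ) + r * (M + 2 * r - μ) / (μ - r) ^ 2 := by
  field_simp
  ring

theorem mul_div_sq_sub_lt_half {μ M Mc r : ℝ} (hM : M < Mc) (hr : 0 < r) (hrμ : r < μ)
    (hq : 3 * r ^ 2 + 2 * Mc * r = μ ^ 2) : r * (M + 2 * r - μ) / (μ - r) ^ 2 < 1 / 2 := by
  rw [div_lt_iff₀ (by nlinarith)]
  nlinarith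

theorem div_add_half_le_one {μ M : ℝ} (hμ : 0 < μ) (hμM : μ ≤ M) : μ / (M + μ) + 1 / 2 ≤ 1 := by
  have : μ / (M + μ) ≤ 1 / 2 := by
    rw [div_le_iff₀ (by linarith)]
    linarith
  linarith

theorem danla_damped_phase_factor (μ M L c : ℝ) (hμ : 0 < μ) (hμM : μ ≤ M)
    (hL : 0 < L) (hc : 0 < c)
    (Mc r φ : ℝ) (hMc : Mc = M + c)
    (hr : r = (Real.sqrt (Mc ^ 2 + 3 * μ ^ 2) - Mc) / 3)
    (hφ : φ = 2 * μ * (μ - r) ^ 2 / (L * (M + μ)) - 2 * r * (μ - r) / L) :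
    (L * φ + 2 * r * (M + r)) / (2 * (μ - r) ^ 2) < μ / (M + μ) + 1 / 2 ∧
    μ / (M + μ) + 1 / 2 ≤ 1 := by
  have hq := three_mul_sq_add_two_mul_eq_of_eq_sqrt hr
  have hr0 : 0 < r := pos_of_eq_sqrt hμ.ne' hr
  have hrμ : r < μ := lt_of_three_mul_sq_add_two_mul_eq (by linarith) hμ hr0 hq
  refine ⟨?_, div_add_half_le_one hμ hμM⟩
  rw [hφ, damped_factor_eq hL.ne' (by linarith) (sub_ne_zero.2 hrμ.ne')]
  linarith [mul_div_sq_sub_lt_half (by linarith : M < Mc) hr0 hrμ hq]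
end

section
/- Let x ∈ E and let H : E →L[ℝ] E be a self-adjoint continuous linear operator with ‖H − ∇²f(x)‖ ≤ r̲. Suppose ‖∇f(x)‖ ≥ φ, set α = φ/‖∇f(x)‖, and let z ∈ E satisfy H z = −α ∇f(x). Then ‖∇f(x + z)‖ ≤ ‖∇f(x)‖ − (1 − (L·φ + 2r̲(M + r̲))/(2(μ − r̲)²))·φ; in particular the gradient norm strictly decreases by a fixed positive constant. -/
open Set

theorem aux_taylor {E : Type*} [NormedAddCommGroup E] [NormedSpace ℝ E]
    (g : E → E) (D : E → E →L[ℝ] E) (hg : ∀ y, HasFDerivAt g (D y) y)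
    (L : ℝ) (hlip : ∀ a b : E, ‖D a - D b‖ ≤ L * ‖a - b‖) (x z : E) :
    ‖g (x + z) - g x - D x z‖ ≤ L / 2 * ‖z‖ ^ 2 := by
  set F : ℝ → E := fun t => g (x + t • z) - g x - t • (D x z) with hF
  set F' : ℝ → E := fun t => D (x + t • z) z - D x z with hF'
  have hline : ∀ t : ℝ, HasDerivAt (fun s : ℝ => x + s • z) z t := by
    intro t
    have h := ((hasDerivAt_id t).smul_const z).const_add x
    simpa using h
  have hFd : ∀ t : ℝ, HasDerivAt F (F' t) t := by
    intro t
    have h1 : HasDerivAt (fun s : ℝ => g (x + s • z)) (D (x + t • z) z) t :=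
      (hg (x + t • z)).comp_hasDerivAt t (hline t)
    have h2 : HasDerivAt (fun s : ℝ => s • (D x z)) (D x z) t := by
      simpa using (hasDerivAt_id t).smul_const (D x z)
    exact (h1.sub_const (g x)).sub h2
  have key := image_norm_le_of_norm_deriv_right_le_deriv_boundary
    (f := F) (f' := F') (a := 0) (b := 1)
    (fun t _ => (hFd t).continuousAt.continuousWithinAt)
    (fun t _ => (hFd t).hasDerivWithinAt)
    (B := fun t => L / 2 * ‖z‖ ^ 2 * t ^ 2) (B' := fun t => L * ‖z‖ ^ 2 * t)
    (by simp [F])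
    (by
      intro t
      have := ((hasDerivAt_pow 2 t).const_mul (L / 2 * ‖z‖ ^ 2))
      exact this.congr_deriv (by simp only [Nat.cast_ofNat, Nat.add_one_sub_one, pow_one]; ring))
    (by
      intro t ht
      have hb : ‖D (x + t • z) - D x‖ ≤ L * ‖t • z‖ := by
        simpa using hlip (x + t • z) x
      have h3 : ‖F' t‖ ≤ ‖D (x + t • z) - D x‖ * ‖z‖ := by
        have := (D (x + t • z) - D x).le_opNorm z
        simpa [F'] using this
      have h4 : ‖t • z‖ = t * ‖z‖ := by
        rw [norm_smul, Real.norm_eq_abs, abs_of_nonneg ht.1]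
      calc ‖F' t‖ ≤ (L * ‖t • z‖) * ‖z‖ := h3.trans (by
              exact mul_le_mul_of_nonneg_right hb (norm_nonneg z))
        _ = L * ‖z‖ ^ 2 * t := by rw [h4]; ring)
  have h1 := key (right_mem_Icc.2 zero_le_one)
  simpa [F] using h1

set_option maxHeartbeats 1000000 in
theorem danla_damped_step_decrease (p : ℕ) (hp : 1 ≤ p)
    (f : EuclideanSpace ℝ (Fin p) → ℝ) (hf : ContDiff ℝ 2 f)
    (μ L M : ℝ) (hμ : 0 < μ) (hL : 0 < L) (hμM : μ ≤ M)
    (hstrong : ∀ x v : EuclideanSpace ℝ (Fin p),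
      μ * ‖v‖ ^ 2 ≤ inner ℝ (fderiv ℝ (gradient f) x v) v)
    (hlip : ∀ x y : EuclideanSpace ℝ (Fin p),
      ‖fderiv ℝ (gradient f) x - fderiv ℝ (gradient f) y‖ ≤ L * ‖x - y‖)
    (hbound : ∀ x : EuclideanSpace ℝ (Fin p), ‖fderiv ℝ (gradient f) x‖ ≤ M)
    (c : ℝ) (hc : 0 < c)
    (Mc r φ : ℝ) (hMc : Mc = M + c)
    (hr : r = (Real.sqrt (Mc ^ 2 + 3 * μ ^ 2) - Mc) / 3)
    (hφ : φ = 2 * μ * (μ - r) ^ 2 / (L * (M + μ)) - 2 * r * (μ - r) / L)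
    (x z : EuclideanSpace ℝ (Fin p))
    (H : EuclideanSpace ℝ (Fin p) →L[ℝ] EuclideanSpace ℝ (Fin p))
    (hHsa : ∀ v w : EuclideanSpace ℝ (Fin p), (inner ℝ (H v) w : ℝ) = inner ℝ v (H w))
    (hHerr : ‖H - fderiv ℝ (gradient f) x‖ ≤ r)
    (hg : φ ≤ ‖gradient f x‖)
    (α : ℝ) (hα : α = φ / ‖gradient f x‖)
    (hz : H z = -α • gradient f x) :
    ‖gradient f (x + z)‖ ≤
      ‖gradient f x‖ - (1 - (L * φ + 2 * r * (M + r)) / (2 * (μ - r) ^ 2)) * φ := by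
  -- scalar facts about r
  have hMcpos : 0 < Mc := by rw [hMc]; linarith
  have hμMc : μ < Mc := by rw [hMc]; linarith
  have hsq : Real.sqrt (Mc ^ 2 + 3 * μ ^ 2) = 3 * r + Mc := by
    rw [hr]; ring
  have hrid : 3 * r ^ 2 + 2 * r * Mc = μ ^ 2 := by
    have h0 : (0:ℝ) ≤ Mc ^ 2 + 3 * μ ^ 2 := by positivity
    have := Real.sq_sqrt h0
    rw [hsq] at this
    nlinarith [this]
  have hr0 : 0 ≤ r := by
    have h1 : Mc ≤ Real.sqrt (Mc ^ 2 + 3 * μ ^ 2) := by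
      have : Mc = Real.sqrt (Mc ^ 2) := by
        rw [Real.sqrt_sq hMcpos.le]
      rw [this]
      exact Real.sqrt_le_sqrt (by nlinarith [Real.sq_sqrt (sq_nonneg Mc)])
    rw [hr]; linarith
  have hrpos : 0 < r := by
    rcases hr0.lt_or_eq with h | h
    · exact h
    · exfalso; nlinarith [hrid]
  have hrμ : r < μ := by nlinarith [hrid]
  have hμr : 0 < μ - r := sub_pos.2 hrμ
  have hkey : 2 * μ < 3 * r + M + 2 * c := by
    by_contra h
    push_neg at h
    have hu : 0 ≤ 2 * μ - M - 2 * c - 3 * r := by linarith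
    have hw : (0:ℝ) ≤ 2 * μ + M + 3 * r := by linarith
    have hA : 0 ≤ (2 * μ - M - 2 * c - 3 * r) * (2 * μ + M + 3 * r) := mul_nonneg hu hw
    have hrid' : 3 * r ^ 2 + 2 * r * (M + c) = μ ^ 2 := by rw [hMc] at hrid; exact hrid
    have hA2 : (2 * μ - M - 2 * c - 3 * r) * (2 * μ + M + 3 * r)
        = μ ^ 2 - M ^ 2 - 4 * μ * c - 2 * M * c := by
      linear_combination (-3 : ℝ) * hrid'
    have hMμ2 : μ ^ 2 ≤ M ^ 2 := pow_le_pow_left₀ hμ.le hμM 2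
    have h1 : 0 < μ * c := mul_pos hμ hc
    have h2 : 0 < M * c := mul_pos (by linarith) hc
    rw [hA2] at hA
    linarith
  have hLMμ : 0 < L * (M + μ) := by
    have : 0 < M + μ := by linarith
    positivity
  have hφnum : φ = (2 * μ * (μ - r) ^ 2 - 2 * r * (μ - r) * (M + μ)) / (L * (M + μ)) := by
    rw [hφ, div_sub_div _ _ hLMμ.ne' hL.ne', div_eq_div_iff (mul_ne_zero hLMμ.ne' hL.ne') hLMμ.ne']
    ring
  have hφpos : 0 < φ := by
    rw [hφnum]
    apply div_pos _ hLMμ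
    have heq : 2 * μ * (μ - r) ^ 2 - 2 * r * (μ - r) * (M + μ)
        = 2 * (μ - r) * r * (3 * r + M + 2 * c - 2 * μ) := by
      rw [hMc] at hrid
      nlinarith [hrid]
    rw [heq]
    have : 0 < 3 * r + M + 2 * c - 2 * μ := by linarith
    positivity
  -- gradient facts
  set g := gradient f with hgdef
  set D := fderiv ℝ (gradient f) with hDdef
  set G := ‖gradient f x‖ with hG
  have hGpos : 0 < G := lt_of_lt_of_le hφpos hg
  have hαG : α * G = φ := by rw [hα]; field_simp
  have hα0 : 0 < α := by rw [hα]; positivity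
  have hα1 : α ≤ 1 := by
    rw [hα, div_le_one hGpos]; exact hg
  have hgc : ContDiff ℝ 1 (gradient f) := by
    have h1 : ContDiff ℝ 1 (fderiv ℝ f) := hf.fderiv_right (le_refl _)
    have h2 : gradient f = fun y => (InnerProductSpace.toDual ℝ _).symm (fderiv ℝ f y) := rfl
    rw [h2]
    exact (InnerProductSpace.toDual ℝ _).symm.contDiff.comp h1
  have hgd : ∀ y, HasFDerivAt (gradient f) (D y) y := fun y =>
    (hgc.differentiable one_ne_zero y).hasFDerivAt
  have hT : ‖g (x + z) - g x - D x z‖ ≤ L / 2 * ‖z‖ ^ 2 :=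
    aux_taylor (gradient f) D hgd L hlip x z
  -- bound on ‖z‖
  set Z := ‖z‖ with hZdef
  have hZ0 : 0 ≤ Z := norm_nonneg z
  have hinner1 : (μ - r) * Z ^ 2 ≤ inner ℝ (H z) z := by
    have h1 : μ * Z ^ 2 ≤ inner ℝ (D x z) z := hstrong x z
    have h2 : |(inner ℝ ((H - D x) z) z : ℝ)| ≤ r * Z ^ 2 := by
      have h3 := abs_real_inner_le_norm ((H - D x) z) z
      have h4 : ‖(H - D x) z‖ ≤ r * Z := by
        calc ‖(H - D x) z‖ ≤ ‖H - D x‖ * ‖z‖ := (H - D x).le_opNorm z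
          _ ≤ r * Z := mul_le_mul_of_nonneg_right hHerr hZ0
      calc |(inner ℝ ((H - D x) z) z : ℝ)| ≤ ‖(H - D x) z‖ * ‖z‖ := h3
        _ ≤ (r * Z) * Z := mul_le_mul_of_nonneg_right h4 hZ0
        _ = r * Z ^ 2 := by ring
    have h5 : (inner ℝ (H z) z : ℝ) = inner ℝ (D x z) z + inner ℝ ((H - D x) z) z := by
      rw [← inner_add_left]
      congr 1
      simp [ContinuousLinearMap.sub_apply]
    rw [h5]
    have := abs_le.1 h2
    nlinarith [h1, this.1]
  have hinner2 : (inner ℝ (H z) z : ℝ) ≤ φ * Z := by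
    rw [hz]
    have h1 : (inner ℝ ((-α • gradient f x : EuclideanSpace ℝ (Fin p))) z : ℝ)
        = -α * inner ℝ (gradient f x) z := by
      rw [real_inner_smul_left]
    rw [h1]
    have h2 : |(inner ℝ (gradient f x) z : ℝ)| ≤ G * Z := by
      calc |(inner ℝ (gradient f x) z : ℝ)| ≤ ‖gradient f x‖ * ‖z‖ :=
            abs_real_inner_le_norm _ _
        _ = G * Z := rfl
    have h3 := abs_le.1 h2
    have : -α * (inner ℝ (gradient f x) z : ℝ) ≤ α * (G * Z) := by
      nlinarith [h3.1]
    calc -α * (inner ℝ (gradient f x) z : ℝ) ≤ α * (G * Z) := this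
      _ = (α * G) * Z := by ring
      _ = φ * Z := by rw [hαG]
  have hZbound : (μ - r) * Z ≤ φ := by
    rcases hZ0.lt_or_eq with h | h
    · nlinarith [hinner1.trans hinner2]
    · rw [← h]; simpa using hφpos.le
  -- decomposition
  have hdec : g (x + z) = (g (x + z) - g x - D x z) + (D x - H) z + (1 - α) • g x := by
    have h1 : (1 - α) • g x = g x + H z := by
      rw [hz, sub_smul, one_smul, neg_smul]
      abel
    rw [h1]
    simp [ContinuousLinearMap.sub_apply]
  have hnorm1 : ‖(D x - H) z‖ ≤ r * Z := by
    calc ‖(D x - H) z‖ ≤ ‖D x - H‖ * ‖z‖ := (D x - H).le_opNorm z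
      _ ≤ r * Z := by
          apply mul_le_mul_of_nonneg_right _ hZ0
          rw [norm_sub_rev]; exact hHerr
  have hnorm2 : ‖(1 - α) • g x‖ = (1 - α) * G := by
    rw [norm_smul, Real.norm_eq_abs, abs_of_nonneg (by linarith)]
  have hmain : ‖g (x + z)‖ ≤ L / 2 * Z ^ 2 + r * Z + (G - φ) := by
    calc ‖g (x + z)‖
        ≤ ‖g (x + z) - g x - D x z‖ + ‖(D x - H) z‖ + ‖(1 - α) • g x‖ := by
          have h6 : ‖(g (x + z) - g x - D x z) + (D x - H) z + (1 - α) • g x‖ ≤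
              ‖g (x + z) - g x - D x z‖ + ‖(D x - H) z‖ + ‖(1 - α) • g x‖ := norm_add₃_le
          rw [← hdec] at h6
          exact h6
      _ ≤ L / 2 * Z ^ 2 + r * Z + (1 - α) * G := by
          rw [hnorm2]
          exact add_le_add (add_le_add hT hnorm1) le_rfl
      _ = L / 2 * Z ^ 2 + r * Z + (G - α * G) := by ring
      _ = L / 2 * Z ^ 2 + r * Z + (G - φ) := by rw [hαG]
  -- final quadratic estimate
  have hquad : L / 2 * Z ^ 2 + r * Z ≤ (L * φ + 2 * r * (M + r)) / (2 * (μ - r) ^ 2) * φ := by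
    have hden : (0:ℝ) < 2 * (μ - r) ^ 2 := by positivity
    rw [div_mul_eq_mul_div (L * φ + 2 * r * (M + r)) (2 * (μ - r) ^ 2) φ, le_div_iff₀ hden]
    nlinarith [mul_le_mul hZbound hZbound (mul_nonneg hμr.le hZ0) hφpos.le,
      mul_le_mul_of_nonneg_left hZbound (mul_nonneg (mul_nonneg (by norm_num : (0:ℝ) ≤ 2) hr0) hμr.le),
      mul_nonneg hr0 hZ0, hL.le, mul_pos hrpos hφpos, sq_nonneg Z]
  have : ‖g (x + z)‖ ≤ G - φ + (L * φ + 2 * r * (M + r)) / (2 * (μ - r) ^ 2) * φ := by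
    linarith
  calc ‖gradient f (x + z)‖ = ‖g (x + z)‖ := rfl
    _ ≤ G - φ + (L * φ + 2 * r * (M + r)) / (2 * (μ - r) ^ 2) * φ := this
    _ = G - (1 - (L * φ + 2 * r * (M + r)) / (2 * (μ - r) ^ 2)) * φ := by ring
end

section
/- Let p ≥ 1 and let A be a real symmetric p×p matrix. Let w₁, …, w_p be an orthonormal basis of eigenvectors of A with corresponding real eigenvalues λ₁, …, λ_p, indexed so that |λ₁| ≥ |λ₂| ≥ … ≥ |λ_p|. Then the nuclear norm of the rank-one deflation satisfies ‖A − λ₁·w₁w₁ᵀ‖₊ ≤ (1 − 1/p)·‖A‖₊. -/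
/-! An orthonormal eigenbasis `w` with eigenvalues `λ` diagonalises `A` as `Wᵀ diag(λ) W`, so
`Aᵀ A = Wᵀ diag(λ²) W` and the nuclear norm of `A` is `∑ |λᵢ|`. The deflation `A - λ₁ w₁ w₁ᵀ` has
the same eigenbasis, with `λ₁` replaced by `0`, so its nuclear norm is `∑ |λᵢ| - |λ₁|`; and
`|λ₁| ≥ (∑ |λᵢ|) / p` because `|λ₁|` is the largest of the `p` terms. -/

open Matrix

/-- The nuclear norm (trace norm) of a real square matrix: the sum of its singular
values, i.e. the sum of the square roots of the eigenvalues of `Aᵀ * A = Aᴴ * A`. -/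
noncomputable def nuclearNorm {p : ℕ} (A : Matrix (Fin p) (Fin p) ℝ) : ℝ :=
  ∑ i, Real.sqrt ((Matrix.isHermitian_conjTranspose_mul_self A).eigenvalues i)

open Polynomial

namespace Matrix

variable {n R : Type*} [Fintype n] [DecidableEq n] [CommRing R]

theorem charpoly_transpose_mul_diagonal_mul {V : Matrix n n R} (hV : V * Vᵀ = 1) (d : n → R) :
    (Vᵀ * diagonal d * V).charpoly = ∏ i, (X - C (d i)) := by
  rw [mul_assoc, charpoly_mul_comm, mul_assoc, hV, mul_one, charpoly_diagonal]

theorem eq_transpose_mul_diagonal_mul_of_mulVec_eq {M V : Matrix n n R} (hV : V * Vᵀ = 1)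
    {μ : n → R} (hev : ∀ i, M *ᵥ V i = μ i • V i) : M = Vᵀ * diagonal μ * V := by
  have hMV : M * Vᵀ = Vᵀ * diagonal μ := by
    ext i j
    rw [mul_diagonal]
    simpa [mul_apply, mulVec, dotProduct, mul_comm _ (μ j)] using congrFun (hev j) i
  calc M = M * (Vᵀ * V) := by rw [mul_eq_one_comm.mp hV, mul_one]
    _ = Vᵀ * diagonal μ * V := by rw [← mul_assoc, hMV]

theorem sub_smul_vecMulVec_mulVec {M V : Matrix n n R} (hV : V * Vᵀ = 1)
    {μ : n → R} (hev : ∀ i, M *ᵥ V i = μ i • V i) (k i : n) :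
    (M - μ k • vecMulVec (V k) (V k)) *ᵥ V i = Function.update μ k 0 i • V i := by
  have hki : V k ⬝ᵥ V i = if k = i then 1 else 0 := by
    simpa [mul_apply', one_apply] using congrFun (congrFun hV k) i
  rw [sub_mulVec, smul_mulVec, vecMulVec_mulVec, hki, hev]
  rcases eq_or_ne i k with rfl | hik
  · simp
  · simp [hik, hik.symm]

theorem IsHermitian.sum_comp_eigenvalues_eq_of_charpoly_eq {M : Matrix n n ℝ}
    (hM : M.IsHermitian) {d : n → ℝ} (h : M.charpoly = ∏ i, (X - C (d i))) (f : ℝ → ℝ) :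
    ∑ i, f (hM.eigenvalues i) = ∑ i, f (d i) := by
  have hroots : Finset.univ.val.map hM.eigenvalues = Finset.univ.val.map d := by
    have := hM.roots_charpoly_eq_eigenvalues
    rw [h, roots_prod _ _ (by simp [Finset.prod_ne_zero_iff, X_sub_C_ne_zero])] at this
    simpa using this.symm
  simpa only [Finset.sum_eq_multiset_sum, Multiset.map_map, Function.comp_def] using
    congrArg (fun s => (s.map f).sum) hroots

end Matrix

theorem nuclearNorm_eq_sum_abs_of_mulVec_eq {p : ℕ} {A V : Matrix (Fin p) (Fin p) ℝ}
    (hV : V * Vᵀ = 1) {μ : Fin p → ℝ} (hev : ∀ i, A *ᵥ V i = μ i • V i) :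
    nuclearNorm A = ∑ i, |μ i| := by
  have hA := eq_transpose_mul_diagonal_mul_of_mulVec_eq hV hev
  have hgram : Aᴴ * A = Vᵀ * diagonal (fun i => μ i ^ 2) * V := by
    rw [conjTranspose_eq_transpose_of_trivial, hA]
    simp only [transpose_mul, transpose_transpose, diagonal_transpose, mul_assoc]
    rw [← mul_assoc V, hV, one_mul, ← mul_assoc (diagonal μ), diagonal_mul_diagonal]
    simp [sq]
  rw [nuclearNorm, IsHermitian.sum_comp_eigenvalues_eq_of_charpoly_eq _
    (hgram ▸ charpoly_transpose_mul_diagonal_mul hV _)]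
  simp [Real.sqrt_sq_eq_abs]

theorem Finset.sum_abs_update_zero {n : Type*} [Fintype n] [DecidableEq n] (μ : n → ℝ)
    (k : n) :
    ∑ i, |Function.update μ k 0 i| = ∑ i, |μ i| - |μ k| := by
  rw [← add_sum_erase _ _ (mem_univ k), ← add_sum_erase _ _ (mem_univ k), Function.update_self,
    abs_zero, zero_add, add_sub_cancel_left]
  exact sum_congr rfl fun i hi => by rw [Function.update_of_ne (ne_of_mem_erase hi)]

theorem nuclear_norm_rank_one_deflation (p : ℕ) (hp : 1 ≤ p)
    (A : Matrix (Fin p) (Fin p) ℝ)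
    (w : Fin p → (Fin p → ℝ)) (lam : Fin p → ℝ)
    (hortho : ∀ i j, w i ⬝ᵥ w j = if i = j then (1 : ℝ) else 0)
    (heig : ∀ i, A.mulVec (w i) = lam i • w i)
    (hord : ∀ i j : Fin p, i ≤ j → |lam j| ≤ |lam i|) :
    nuclearNorm
        (A - lam ⟨0, by omega⟩ •
          Matrix.vecMulVec (w ⟨0, by omega⟩) (w ⟨0, by omega⟩)) ≤
      (1 - 1 / (p : ℝ)) * nuclearNorm A := by
  set k : Fin p := ⟨0, by omega⟩
  have hW : of w * (of w)ᵀ = 1 := by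
    ext i j
    rw [mul_apply', one_apply]
    exact hortho i j
  show nuclearNorm (A - lam k • vecMulVec (of w k) (of w k)) ≤ _
  rw [nuclearNorm_eq_sum_abs_of_mulVec_eq hW (sub_smul_vecMulVec_mulVec hW heig k),
    nuclearNorm_eq_sum_abs_of_mulVec_eq hW heig, Finset.sum_abs_update_zero]
  have hmax : ∑ i, |lam i| ≤ p * |lam k| := by
    simpa using Finset.sum_le_card_nsmul Finset.univ _ _ fun i _ => hord k i (Nat.zero_le i)
  have hp' : (0 : ℝ) < p := by exact_mod_cast hp
  calc ∑ i, |lam i| - |lam k| ≤ ∑ i, |lam i| - (∑ i, |lam i|) / p := by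
        gcongr
        rwa [div_le_iff₀' hp']
    _ = (1 - 1 / (p : ℝ)) * ∑ i, |lam i| := by ring
end
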